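/- arXiv:2505.20784 — 13 statements merged into one kernel-verified Lean document; each statement's English description precedes it below -/
import Mathlib

section
/- Every graph that is C3-free and probe P5-free is 3-colourable. In particular, every probe (C3,P5)-free graph is 3-colourable. -/
open SimpleGraph

/-- `H` does not occur as an induced subgraph of `G`. -/
def IndFree {W V : Type*} (H : SimpleGraph W) (G : SimpleGraph V) : Prop :=
  IsEmpty (H ↪g G)

/-- `(G, Nᶜ, N)` is a partitioned probe `H`-free graph: `N` is an independent set of
non-probes and `G` can be made `H`-free by adding edges inside `N`. -/
def PartProbeFree {W V : Type*} (H : SimpleGraph W) (G : SimpleGraph V) (N : Set V) : Prop :=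
  (∀ u ∈ N, ∀ v ∈ N, ¬ G.Adj u v) ∧
  ∃ G' : SimpleGraph V, G ≤ G' ∧
    (∀ u v, G'.Adj u v → ¬ G.Adj u v → u ∈ N ∧ v ∈ N) ∧ IndFree H G'

/-!
Let `H` be the graph of the edges of `G` between probes. An induced subgraph of `G` with at most
one non-probe is also induced in the `P₅`-free completion, so `H` is `(C₃, P₅)`-free. A component
of `H` is therefore either bipartite or, by a shortest odd closed walk, contains an induced `C₅`;
in the latter case every vertex of the component, and every vertex adjacent to it, sees that `C₅`
exactly as one of its vertices does, so the component is a blow-up of `C₅` and inherits the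
3-colouring of `C₅`. Two probe neighbours `a`, `x` of a non-probe `v` in different nontrivial
components would give an induced `b a v x y`, so `v` sees only one nontrivial component. Isolated
probes get colour `2`; if `v` has an isolated probe neighbour `u`, then `u v a b c` is never an
induced path, which makes the neighbourhood of `v` one side of a bipartition of its component, so
its neighbours there get a single colour of `{0, 1}`. Each non-probe then finds a free colour.
-/

namespace SimpleGraph

variable {V W : Type*} {G : SimpleGraph V}

theorem CliqueFree.not_adj_of_adj_of_adj (hG : G.CliqueFree 3) {a b c : V} (hab : G.Adj a b)
    (hbc : G.Adj b c) : ¬ G.Adj a c := by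
  classical
  exact fun hac => hG {a, b, c} (is3Clique_triple_iff.mpr ⟨hab, hac, hbc⟩)

theorem cycleGraph_five_adj_iff {i j : Fin 5} :
    (cycleGraph 5).Adj i j ↔ j = i + 1 ∨ j = i + 4 := by
  revert i j
  decide

def Embedding.ofAdjIff {P : SimpleGraph W} (f : W → V)
    (hf : ∀ i j, G.Adj (f i) (f j) ↔ P.Adj i j)
    (hP : ∀ i j, (∀ k, P.Adj i k ↔ P.Adj j k) → i = j) : P ↪g G where
  toFun := f
  inj' i j hij := hP i j fun k => by rw [← hf, ← hf, hij]
  map_rel_iff' := hf _ _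

theorem adj_iff_cycleGraph_five_adj {f : Fin 5 → V} (h₁ : ∀ i, G.Adj (f i) (f (i + 1)))
    (h₂ : ∀ i, ¬ G.Adj (f i) (f (i + 2))) (i j : Fin 5) :
    G.Adj (f i) (f j) ↔ (cycleGraph 5).Adj i j := by
  obtain ⟨k, rfl⟩ : ∃ k, j = i + k := ⟨j - i, (add_sub_cancel i j).symm⟩
  rw [cycleGraph_five_adj_iff]
  fin_cases k
  · simp
  · simpa using h₁ i
  · simpa [show ¬ (2 : Fin 5) = 1 by decide, show ¬ (2 : Fin 5) = 4 by decide] using h₂ i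
  · have h := h₂ (i + 3)
    rw [show i + 3 + 2 = i by omega] at h
    simpa [show ¬ (3 : Fin 5) = 1 by decide, show ¬ (3 : Fin 5) = 4 by decide] using
      fun h' => h h'.symm
  · simpa [show i + 4 + 1 = i by omega] using (h₁ (i + 4)).symm

theorem colorable_of_forall_exists_ne {N : Set V} (hN : ∀ u ∈ N, ∀ v ∈ N, ¬ G.Adj u v) {n : ℕ}
    (c : V → Fin n) (hc : ∀ x y, G.Adj x y → x ∉ N → y ∉ N → c x ≠ c y)
    (hext : ∀ v ∈ N, ∃ k, ∀ x, G.Adj v x → c x ≠ k) : G.Colorable n := by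
  classical
  choose k hk using hext
  refine ⟨Coloring.mk (fun x => if hx : x ∈ N then k x hx else c x) fun {x y} hxy => ?_⟩
  by_cases hx : x ∈ N <;> by_cases hy : y ∈ N
  · exact absurd hxy (hN x hx y hy)
  · simpa [hx, hy] using (hk x hx y hxy).symm
  · simpa [hx, hy] using hk y hy x hxy.symm
  · simpa [hx, hy] using hc x y hxy hx hy

end SimpleGraph

theorem IndFree.cliqueFree_three {V : Type*} {G : SimpleGraph V}
    (h : IndFree (cycleGraph 3) G) : G.CliqueFree 3 := by
  rw [IndFree, cycleGraph_three_eq_top] at h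
  exact cliqueFree_iff.mpr ⟨fun f => h.false f.topEmbedding⟩

theorem IndFree.false_of_path_five {V : Type*} {G : SimpleGraph V}
    (h : IndFree (pathGraph 5) G) {a b c d e : V}
    (hab : G.Adj a b) (hbc : G.Adj b c) (hcd : G.Adj c d) (hde : G.Adj d e)
    (hac : ¬ G.Adj a c) (had : ¬ G.Adj a d) (hae : ¬ G.Adj a e)
    (hbd : ¬ G.Adj b d) (hbe : ¬ G.Adj b e) (hce : ¬ G.Adj c e) : False := by
  refine h.false (Embedding.ofAdjIff ![a, b, c, d, e] (fun i j => ?_)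
    (by simp only [pathGraph_adj]; decide))
  fin_cases i <;> fin_cases j <;> simp [pathGraph_adj, G.adj_comm, *]

theorem IndFree.induce_insert_compl {V W : Type*} {P : SimpleGraph W} {G G' : SimpleGraph V}
    {N : Set V} (hle : G ≤ G') (hF : ∀ u v, G'.Adj u v → ¬ G.Adj u v → u ∈ N ∧ v ∈ N)
    (h : IndFree P G') (v : V) : IndFree P (G.induce (insert v Nᶜ)) := by
  have hagree : G'.induce (insert v Nᶜ) = G.induce (insert v Nᶜ) := by
    ext ⟨x, hx⟩ ⟨y, hy⟩
    refine ⟨fun hxy => ?_, fun hxy => hle hxy⟩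
    by_contra hG
    obtain ⟨hxN, hyN⟩ := hF x y hxy hG
    obtain rfl : x = v := hx.resolve_right (not_not_intro hxN)
    obtain rfl : y = x := hy.resolve_right (not_not_intro hyN)
    exact G'.irrefl hxy
  rw [IndFree, ← hagree]
  exact ⟨fun f => h.false ((Embedding.induce _).comp f)⟩

namespace SimpleGraph

variable {V : Type*} {H : SimpleGraph V}

theorem Reachable.induction_on_adj {P : V → Prop} (hP : ∀ x y, P x → H.Adj x y → P y)
    {a x : V} (ha : P a) (h : H.Reachable a x) : P x := by
  rw [reachable_iff_reflTransGen] at h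
  induction h with
  | refl => exact ha
  | tail _ hxy ih => exact hP _ _ ih hxy

theorem Walk.exists_closed_walks_of_adj_getVert {u : V} (w : H.Walk u u) {i j : ℕ} (hij : i ≤ j)
    (hj : j ≤ w.length) (h : H.Adj (w.getVert i) (w.getVert j)) :
    (∃ c : H.Walk (w.getVert i) (w.getVert i), c.length = j - i + 1) ∧
      ∃ c : H.Walk u u, c.length = i + 1 + (w.length - j) := by
  refine ⟨⟨.cons h (((w.drop i).take (j - i)).copy rfl ?_).reverse, ?_⟩,
    ⟨(w.take i).append (.cons h (w.drop j)), ?_⟩⟩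
  · rw [Walk.drop_getVert, Nat.add_sub_cancel' hij]
  · simp only [Walk.reverse_copy, Walk.cons_copy, Walk.copy_rfl_rfl, Walk.length_cons,
      Walk.length_reverse, Walk.take_length, Walk.drop_length]
    omega
  · simp only [Walk.length_append, Walk.take_length, Walk.length_cons, Walk.drop_length]
    omega

namespace ConnectedComponent

def IsColoring {α : Type*} (K : H.ConnectedComponent) (f : V → α) : Prop :=
  ∀ x y, H.Adj x y → H.connectedComponentMk x = K → f x ≠ f y

theorem IsColoring.even_length_iff {K : H.ConnectedComponent} {g : V → Bool}
    (hg : K.IsColoring g) {a x : V} (p : H.Walk a x) (ha : H.connectedComponentMk a = K) :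
    Even p.length ↔ g a = g x := by
  induction p with
  | nil => simp
  | cons h q ih =>
    have hne := hg _ _ h ha
    rw [Walk.length_cons, Nat.even_add_one,
      ih ((ConnectedComponent.sound h.reachable).symm.trans ha)]
    revert hne
    cases g _ <;> cases g _ <;> cases g _ <;> simp

theorem exists_odd_closed_walk {K : H.ConnectedComponent}
    (hK : ¬ ∃ g : V → Bool, K.IsColoring g) :
    ∃ u, H.connectedComponentMk u = K ∧ ∃ w : H.Walk u u, Odd w.length := by
  classical
  by_contra hodd
  obtain ⟨r, rfl⟩ := K.exists_rep
  refine hK ⟨fun x => decide (∃ p : H.Walk r x, Odd p.length), fun x y hxy hx => ?_⟩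
  simp only [ne_eq, decide_eq_decide]
  intro hiff
  obtain ⟨p⟩ := (ConnectedComponent.exact hx).symm
  rcases Nat.even_or_odd p.length with hp | hp
  · obtain ⟨q, hq⟩ := hiff.mpr ⟨p.concat hxy, by simpa [Nat.odd_add_one] using hp⟩
    refine hodd ⟨r, rfl, p.append q.reverse, ?_⟩
    rw [Walk.length_append, Walk.length_reverse]
    exact hp.add_odd hq
  · obtain ⟨q, hq⟩ := hiff.mp ⟨p, hp⟩
    refine hodd ⟨r, rfl, p.append (.cons hxy q.reverse), ?_⟩
    rw [Walk.length_append, Walk.length_cons, Walk.length_reverse]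
    exact hp.add_even hq.add_one

end ConnectedComponent

theorem exists_cycleGraph_five_of_chordless (hT : H.CliqueFree 3) (hP : IndFree (pathGraph 5) H)
    {u : V} (w : H.Walk u u) (hw : Odd w.length)
    (hchord : ∀ i j, i + 2 ≤ j → j + 2 ≤ w.length + i → j ≤ w.length →
      ¬ H.Adj (w.getVert i) (w.getVert j)) :
    ∃ X : cycleGraph 5 ↪g H, X 0 = u := by
  have hadj : ∀ i < w.length, H.Adj (w.getVert i) (w.getVert (i + 1)) :=
    fun _ => w.adj_getVert_succ
  have hend : w.getVert w.length = w.getVert 0 := by simp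
  obtain ⟨k, hk⟩ := hw
  obtain rfl | rfl | rfl | hk3 : k = 0 ∨ k = 1 ∨ k = 2 ∨ 3 ≤ k := by omega
  · have h := hadj 0 (by omega)
    rw [show 0 + 1 = w.length by omega, hend] at h
    exact absurd h H.irrefl
  · have h := hadj 2 (by omega)
    rw [show 2 + 1 = w.length by omega, hend] at h
    exact absurd h.symm (hT.not_adj_of_adj_of_adj (hadj 0 (by omega)) (hadj 1 (by omega)))
  · refine ⟨Embedding.ofAdjIff (fun i : Fin 5 => w.getVert i)
      (adj_iff_cycleGraph_five_adj (fun i => ?_) (fun i => ?_)) (by decide), w.getVert_zero⟩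
    · fin_cases i
      · exact hadj 0 (by omega)
      · exact hadj 1 (by omega)
      · exact hadj 2 (by omega)
      · exact hadj 3 (by omega)
      · simpa [show 4 + 1 = w.length by omega, hend] using hadj 4 (by omega)
    · fin_cases i
      · exact hchord 0 2 (by omega) (by omega) (by omega)
      · exact hchord 1 3 (by omega) (by omega) (by omega)
      · exact hchord 2 4 (by omega) (by omega) (by omega)
      · exact fun h => hchord 0 3 (by omega) (by omega) (by omega) h.symm
      · exact fun h => hchord 1 4 (by omega) (by omega) (by omega) h.symm
  · exact (hP.false_of_path_five (hadj 0 (by omega)) (hadj 1 (by omega)) (hadj 2 (by omega))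
      (hadj 3 (by omega)) (hchord 0 2 (by omega) (by omega) (by omega))
      (hchord 0 3 (by omega) (by omega) (by omega)) (hchord 0 4 (by omega) (by omega) (by omega))
      (hchord 1 3 (by omega) (by omega) (by omega)) (hchord 1 4 (by omega) (by omega) (by omega))
      (hchord 2 4 (by omega) (by omega) (by omega))).elim

theorem exists_cycleGraph_five_of_odd_closed_walk (hT : H.CliqueFree 3)
    (hP : IndFree (pathGraph 5) H) {u : V} (w : H.Walk u u) (hw : Odd w.length) :
    ∃ X : cycleGraph 5 ↪g H, H.Reachable u (X 0) := by
  suffices ∀ n, ∀ u (w : H.Walk u u), w.length = n → Odd n →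
      ∃ X : cycleGraph 5 ↪g H, H.Reachable u (X 0) from this _ u w rfl hw
  intro n
  induction n using Nat.strong_induction_on with
  | _ n ih =>
  rintro u w rfl hw
  by_cases hchord : ∃ i j, i + 2 ≤ j ∧ j + 2 ≤ w.length + i ∧ j ≤ w.length ∧
      H.Adj (w.getVert i) (w.getVert j)
  · obtain ⟨i, j, hij, hji, hj, h⟩ := hchord
    obtain ⟨⟨c, hc⟩, ⟨c', hc'⟩⟩ := w.exists_closed_walks_of_adj_getVert (by omega) hj h
    -- the two closed walks have total length `w.length + 2`, so one of them is odd
    rcases Nat.even_or_odd (j - i + 1) with he | ho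
    · exact ih _ (by omega) u c' hc' (by rw [Nat.odd_iff] at hw ⊢; rw [Nat.even_iff] at he; omega)
    · obtain ⟨X, hX⟩ := ih _ (by omega) _ c hc ho
      exact ⟨X, Reachable.trans ⟨w.take i⟩ hX⟩
  · push Not at hchord
    obtain ⟨X, hX⟩ := exists_cycleGraph_five_of_chordless hT hP w hw hchord
    exact ⟨X, hX ▸ .refl _⟩

/-- `y` lies in the `i`-th bag of a blow-up of the `5`-cycle `X`. -/
def InBag (G : SimpleGraph V) (X : Fin 5 → V) (y : V) (i : Fin 5) : Prop :=
  ∀ t, G.Adj y (X t) ↔ (cycleGraph 5).Adj i t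

variable {G : SimpleGraph V}

section Bags

variable {X : Fin 5 → V}

theorem InBag.cycleGraph_adj (hT : G.CliqueFree 3) {y z : V} {i k : Fin 5}
    (hy : InBag G X y i) (hz : InBag G X z k) (hyz : G.Adj y z) : (cycleGraph 5).Adj i k := by
  by_contra hik
  have hcommon : ∀ i k : Fin 5, ¬ (cycleGraph 5).Adj i k →
      ∃ t, (cycleGraph 5).Adj i t ∧ (cycleGraph 5).Adj k t := by decide
  obtain ⟨t, hit, hkt⟩ := hcommon i k hik
  exact hT.not_adj_of_adj_of_adj hyz ((hz t).mpr hkt) ((hy t).mpr hit)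

theorem inBag_of_adj_of_adj (hT : G.CliqueFree 3) (hX : ∀ i, InBag G X (X i) i) {w : V}
    {i : Fin 5} (h₀ : G.Adj w (X i)) (h₂ : G.Adj w (X (i + 2))) : InBag G X w (i + 1) := by
  intro t
  rw [cycleGraph_five_adj_iff]
  refine ⟨fun hwt => ?_, by
    rintro (rfl | rfl) <;> simpa [show i + 1 + 1 = i + 2 by omega, show i + 1 + 4 = i by omega]⟩
  by_contra hne
  have hX' : G.Adj (X t) (X i) ∨ G.Adj (X t) (X (i + 2)) := by
    rw [hX t i, hX t (i + 2), cycleGraph_five_adj_iff, cycleGraph_five_adj_iff]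
    omega
  rcases hX' with h | h
  · exact hT.not_adj_of_adj_of_adj hwt h h₀
  · exact hT.not_adj_of_adj_of_adj hwt h h₂

end Bags

def probeGraph (G : SimpleGraph V) (N : Set V) : SimpleGraph V where
  Adj x y := G.Adj x y ∧ x ∉ N ∧ y ∉ N
  symm := ⟨fun _ _ h => ⟨h.1.symm, h.2.2, h.2.1⟩⟩
  loopless := ⟨fun _ h => G.irrefl h.1⟩

variable {N : Set V}

theorem probeGraph_le : probeGraph G N ≤ G := fun _ _ h => h.1

theorem indFree_probeGraph {W : Type*} [Nonempty W] {P : SimpleGraph W}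
    (hP : ∀ i, ∃ j, P.Adj i j) (h : ∀ v, IndFree P (G.induce (insert v Nᶜ))) :
    IndFree P (probeGraph G N) := by
  refine ⟨fun f => ?_⟩
  have hf i : f i ∉ N := by
    obtain ⟨j, hij⟩ := hP i
    exact (f.map_adj_iff.mpr hij).2.1
  exact (h (f (Classical.arbitrary W))).false
    { toFun i := ⟨f i, .inr (hf i)⟩
      inj' i j hij := f.injective (congrArg Subtype.val hij)
      map_rel_iff' := fun {i j} => show G.Adj (f i) (f j) ↔ _ from
        ⟨fun hij => f.map_adj_iff.mp ⟨hij, hf i, hf j⟩, fun hij => (f.map_adj_iff.mpr hij).1⟩ }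

/-- Isolated probes will get colour `2`, so the colour `k` left free for a non-probe must avoid `2`
when the non-probe has an isolated probe neighbour. -/
def IsExtendableOn (K : (probeGraph G N).ConnectedComponent) (f : V → Fin 3) : Prop :=
  K.IsColoring f ∧ ∀ v ∈ N, ∀ a, G.Adj v a → (probeGraph G N).connectedComponentMk a = K →
    ∃ k, (∀ x, G.Adj v x → (probeGraph G N).connectedComponentMk x = K → f x ≠ k) ∧
      ∀ u, G.Adj v u → u ∉ (probeGraph G N).support → k ≠ 2

section Probe

variable (hN : ∀ u ∈ N, ∀ v ∈ N, ¬ G.Adj u v) (hT : G.CliqueFree 3)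
  (hP5 : ∀ v, IndFree (pathGraph 5) (G.induce (insert v Nᶜ)))
include hP5

theorem false_of_path_five_of_mem_insert {v a b c d e : V} (ha : a ∈ insert v Nᶜ)
    (hb : b ∈ insert v Nᶜ) (hc : c ∈ insert v Nᶜ) (hd : d ∈ insert v Nᶜ) (he : e ∈ insert v Nᶜ)
    (hab : G.Adj a b) (hbc : G.Adj b c) (hcd : G.Adj c d) (hde : G.Adj d e)
    (hac : ¬ G.Adj a c) (had : ¬ G.Adj a d) (hae : ¬ G.Adj a e)
    (hbd : ¬ G.Adj b d) (hbe : ¬ G.Adj b e) (hce : ¬ G.Adj c e) : False :=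
  (hP5 v).false_of_path_five (a := ⟨a, ha⟩) (b := ⟨b, hb⟩) (c := ⟨c, hc⟩) (d := ⟨d, hd⟩)
    (e := ⟨e, he⟩) hab hbc hcd hde hac had hae hbd hbe hce

include hT

theorem connectedComponentMk_eq_of_adj_of_adj {v a x : V} (hva : G.Adj v a) (hvx : G.Adj v x)
    (ha : a ∈ (probeGraph G N).support) (hx : x ∈ (probeGraph G N).support) :
    (probeGraph G N).connectedComponentMk a = (probeGraph G N).connectedComponentMk x := by
  by_contra hne
  obtain ⟨b, hab⟩ := (probeGraph G N).mem_support.mp ha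
  obtain ⟨y, hxy⟩ := (probeGraph G N).mem_support.mp hx
  have hsep : ∀ {b' y'},
      (probeGraph G N).connectedComponentMk b' = (probeGraph G N).connectedComponentMk a →
      (probeGraph G N).connectedComponentMk y' = (probeGraph G N).connectedComponentMk x →
      b' ∉ N → y' ∉ N → ¬ G.Adj b' y' :=
    fun hb hy hbN hyN hby =>
      hne (hb.symm.trans ((ConnectedComponent.sound
        (show (probeGraph G N).Adj _ _ from ⟨hby, hbN, hyN⟩).reachable).trans hy))
  have hb := (ConnectedComponent.sound hab.reachable).symm
  have hy := (ConnectedComponent.sound hxy.reachable).symm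
  exact false_of_path_five_of_mem_insert hP5 (v := v) (.inr hab.2.2) (.inr hab.2.1) (.inl rfl)
    (.inr hxy.2.1) (.inr hxy.2.2) hab.1.symm hva.symm hvx hxy.1
    (fun h => hT.not_adj_of_adj_of_adj hva hab.1 h.symm) (hsep hb rfl hab.2.2 hxy.2.1)
    (hsep hb hy hab.2.2 hxy.2.2) (hsep rfl rfl hab.2.1 hxy.2.1) (hsep rfl hy hab.2.1 hxy.2.2)
    (hT.not_adj_of_adj_of_adj hvx hxy.1)

theorem exists_inBag_of_adj {X : Fin 5 → V} (hX : ∀ i, InBag G X (X i) i) (hXN : ∀ i, X i ∉ N)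
    {w z : V} {j : Fin 5} (hz : InBag G X z j) (hzN : z ∉ N) (hwz : G.Adj w z) :
    ∃ i, InBag G X w i := by
  have hadj : ∀ i t, G.Adj (X i) (X t) ↔ t = i + 1 ∨ t = i + 4 :=
    fun i t => (hX i t).trans cycleGraph_five_adj_iff
  by_cases hS : ∃ s, G.Adj w (X s)
  · obtain ⟨s, hs⟩ := hS
    by_cases h₂ : G.Adj w (X (s + 2))
    · exact ⟨s + 1, inBag_of_adj_of_adj hT hX hs h₂⟩
    by_cases h₃ : G.Adj w (X (s + 3))
    · refine ⟨s + 3 + 1, inBag_of_adj_of_adj hT hX h₃ ?_⟩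
      rwa [show s + 3 + 2 = s by omega]
    exfalso
    refine false_of_path_five_of_mem_insert hP5 (v := w) (.inl rfl) (.inr (hXN s))
      (.inr (hXN (s + 1))) (.inr (hXN (s + 2))) (.inr (hXN (s + 3))) hs
      ((hadj _ _).mpr (by omega)) ((hadj _ _).mpr (by omega)) ((hadj _ _).mpr (by omega))
      (fun h => hT.not_adj_of_adj_of_adj hs ((hadj _ _).mpr (by omega)) h) h₂ h₃
      (fun h => by have := (hadj _ _).mp h; omega) (fun h => by have := (hadj _ _).mp h; omega)
      (fun h => by have := (hadj _ _).mp h; omega)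
  · push Not at hS
    exfalso
    refine false_of_path_five_of_mem_insert hP5 (v := w) (.inl rfl) (.inr hzN)
      (.inr (hXN (j + 1))) (.inr (hXN (j + 2))) (.inr (hXN (j + 3))) hwz
      ((hz _).mpr (by rw [cycleGraph_five_adj_iff]; omega)) ((hadj _ _).mpr (by omega))
      ((hadj _ _).mpr (by omega)) (hS _) (hS _) (hS _)
      (fun h => by have := cycleGraph_five_adj_iff.mp ((hz _).mp h); omega)
      (fun h => by have := cycleGraph_five_adj_iff.mp ((hz _).mp h); omega)
      (fun h => by have := (hadj _ _).mp h; omega)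

include hN

theorem adj_of_adj_of_notMem_support {v u a b c : V} (hv : v ∈ N) (hvu : G.Adj v u)
    (hu : u ∉ (probeGraph G N).support) (hva : G.Adj v a) (hab : (probeGraph G N).Adj a b)
    (hbc : (probeGraph G N).Adj b c) : G.Adj v c := by
  by_contra hvc
  have huN : u ∉ N := fun h => hN v hv u h hvu
  have hu' : ∀ x ∉ N, ¬ G.Adj u x := fun x hx hux =>
    hu (Adj.mem_support_left (G := probeGraph G N) ⟨hux, huN, hx⟩)
  exact false_of_path_five_of_mem_insert hP5 (v := v) (.inr huN) (.inl rfl) (.inr hab.2.1)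
    (.inr hab.2.2) (.inr hbc.2.2) hvu.symm hva hab.1 hbc.1 (hu' a hab.2.1) (hu' b hab.2.2)
    (hu' c hbc.2.2) (hT.not_adj_of_adj_of_adj hva hab.1) hvc
    (hT.not_adj_of_adj_of_adj hab.1 hbc.1)

theorem isColoring_decide_adj [DecidableRel G.Adj] {v u a : V} (hv : v ∈ N) (hvu : G.Adj v u)
    (hu : u ∉ (probeGraph G N).support) (hva : G.Adj v a) :
    ((probeGraph G N).connectedComponentMk a).IsColoring fun x => decide (G.Adj v x) := by
  have hR : ∀ x, (probeGraph G N).Reachable a x →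
      G.Adj v x ∨ ∀ y, (probeGraph G N).Adj x y → G.Adj v y := by
    refine fun x => Reachable.induction_on_adj
      (P := fun x => G.Adj v x ∨ ∀ y, (probeGraph G N).Adj x y → G.Adj v y)
      (fun x y hx hxy => ?_) (.inl hva)
    rcases hx with hvx | hvx
    · exact .inr fun z hyz => adj_of_adj_of_notMem_support hN hT hP5 hv hvu hu hvx hxy hyz
    · exact .inl (hvx y hxy)
  intro x y hxy hx
  rcases hR x (ConnectedComponent.exact hx).symm with hvx | hvx
  · simp [hvx, hT.not_adj_of_adj_of_adj hvx hxy.1]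
  · have hvx' : ¬ G.Adj v x := fun h => hT.not_adj_of_adj_of_adj h hxy.1 (hvx y hxy)
    simp [hvx', hvx y hxy]

theorem isExtendableOn_of_isColoring {K : (probeGraph G N).ConnectedComponent} {g : V → Bool}
    (hg : K.IsColoring g) : IsExtendableOn K fun x => bif g x then 0 else 1 := by
  classical
  refine ⟨fun x y hxy hx => ?_, fun v hv a hva ha => ?_⟩
  · have := hg x y hxy hx
    dsimp only
    revert this
    cases g x <;> cases g y <;> simp
  by_cases hiso : ∃ u, G.Adj v u ∧ u ∉ (probeGraph G N).support
  · obtain ⟨u, hvu, hu⟩ := hiso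
    refine ⟨bif g a then 1 else 0, fun x hvx hx => ?_, fun _ _ _ => by cases g a <;> simp⟩
    obtain ⟨p⟩ := ConnectedComponent.exact (ha.trans hx.symm)
    have hgx : g a = g x := (hg.even_length_iff p ha).mp
      (((isColoring_decide_adj hN hT hP5 hv hvu hu hva).even_length_iff p rfl).mpr
        (by simp [hva, hvx]))
    dsimp only
    rw [← hgx]
    cases g a <;> simp
  · push Not at hiso
    exact ⟨2, fun x _ _ => by dsimp only; cases g x <;> simp,
      fun u hvu hu => absurd (hiso u hvu) hu⟩

theorem exists_isExtendableOn_of_cycleGraph_five {K : (probeGraph G N).ConnectedComponent}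
    (hK : ¬ ∃ g : V → Bool, K.IsColoring g) (X : cycleGraph 5 ↪g probeGraph G N)
    (hX₀ : (probeGraph G N).connectedComponentMk (X 0) = K) : ∃ f, IsExtendableOn K f := by
  classical
  have hXN : ∀ i, X i ∉ N := fun i =>
    (X.map_adj_iff.mpr (cycleGraph_five_adj_iff.mpr (.inl rfl) :
      (cycleGraph 5).Adj i (i + 1))).2.1
  have hX : ∀ i, InBag G X (X i) i := fun i t =>
    ⟨fun h => X.map_adj_iff.mp ⟨h, hXN i, hXN t⟩, fun h => (X.map_adj_iff.mpr h).1⟩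
  have hbag : ∀ y, (probeGraph G N).connectedComponentMk y = K → ∃ i, InBag G X y i :=
    fun y hy => Reachable.induction_on_adj (P := fun y => ∃ i, InBag G X y i)
      (fun x y ⟨_, hx⟩ (hxy : (probeGraph G N).Adj x y) =>
        exists_inBag_of_adj hT hP5 hX hXN hx hxy.2.1 hxy.1.symm)
      ⟨0, hX 0⟩ (ConnectedComponent.exact (hX₀.trans hy.symm))
  let bag : V → Fin 5 := fun y => if h : ∃ i, InBag G X y i then h.choose else 0
  have hbag' : ∀ y, (probeGraph G N).connectedComponentMk y = K → InBag G X y (bag y) :=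
    fun y hy => by simpa only [bag, dif_pos (hbag y hy)] using (hbag y hy).choose_spec
  let c := cycleGraph.tricoloring 5 (by norm_num)
  refine ⟨fun y => c (bag y), fun x y hxy hx => ?_, fun v hv a hva ha => ?_⟩
  · have hy := (ConnectedComponent.sound hxy.reachable).symm.trans hx
    exact c.valid ((hbag' x hx).cycleGraph_adj hT (hbag' y hy) hxy.1)
  obtain ⟨i, hvi⟩ :=
    exists_inBag_of_adj hT hP5 hX hXN (hbag' a ha) (fun haN => hN v hv a haN hva) hva
  refine ⟨c i, fun x hvx hx => (c.valid (hvi.cycleGraph_adj hT (hbag' x hx) hvx)).symm,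
    fun u hvu hu => (hK ⟨_, ha ▸ isColoring_decide_adj hN hT hP5 hv hvu hu hva⟩).elim⟩

theorem exists_isExtendableOn (K : (probeGraph G N).ConnectedComponent) :
    ∃ f, IsExtendableOn K f := by
  by_cases hK : ∃ g : V → Bool, K.IsColoring g
  · obtain ⟨g, hg⟩ := hK
    exact ⟨_, isExtendableOn_of_isColoring hN hT hP5 hg⟩
  obtain ⟨u, hu, w, hw⟩ := ConnectedComponent.exists_odd_closed_walk hK
  obtain ⟨X, hX⟩ := exists_cycleGraph_five_of_odd_closed_walk (hT.anti probeGraph_le)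
    (indFree_probeGraph (by simp only [pathGraph_adj]; decide) hP5) w hw
  exact exists_isExtendableOn_of_cycleGraph_five hN hT hP5 hK X
    ((ConnectedComponent.sound hX).symm.trans hu)

theorem colorable_three_of_probe : G.Colorable 3 := by
  classical
  choose f hf using exists_isExtendableOn hN hT hP5
  refine colorable_of_forall_exists_ne hN (fun x => if x ∈ (probeGraph G N).support then
    f ((probeGraph G N).connectedComponentMk x) x else 2) (fun x y hxy hx hy => ?_) fun v hv => ?_
  · have hH : (probeGraph G N).Adj x y := ⟨hxy, hx, hy⟩
    rw [if_pos hH.mem_support_left, if_pos hH.mem_support_right,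
      ← ConnectedComponent.sound hH.reachable]
    exact (hf _).1 x y hH rfl
  by_cases hsupp : ∃ a, G.Adj v a ∧ a ∈ (probeGraph G N).support
  · obtain ⟨a, hva, ha⟩ := hsupp
    obtain ⟨k, hk, hk₂⟩ := (hf _).2 v hv a hva rfl
    refine ⟨k, fun x hvx => ?_⟩
    by_cases hx : x ∈ (probeGraph G N).support
    · have hax := connectedComponentMk_eq_of_adj_of_adj hT hP5 hva hvx ha hx
      rw [if_pos hx, ← hax]
      exact hk x hvx hax.symm
    · rw [if_neg hx]
      exact (hk₂ x hvx hx).symm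
  · push Not at hsupp
    exact ⟨0, fun x hvx => by simp [hsupp x hvx]⟩

end Probe

end SimpleGraph

theorem stmt_0_general {V : Type*} (G : SimpleGraph V) :
    (IndFree (cycleGraph 3) G → (∃ N : Set V, PartProbeFree (pathGraph 5) G N) →
      G.Colorable 3) ∧
    ((∃ N : Set V, (∀ u ∈ N, ∀ v ∈ N, ¬ G.Adj u v) ∧
        ∃ G' : SimpleGraph V, G ≤ G' ∧
          (∀ u v, G'.Adj u v → ¬ G.Adj u v → u ∈ N ∧ v ∈ N) ∧
          IndFree (cycleGraph 3) G' ∧ IndFree (pathGraph 5) G') →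
      G.Colorable 3) := by
  refine ⟨fun hC3 ⟨N, hN, G', hle, hF, hP5⟩ => ?_, fun ⟨N, hN, G', hle, hF, hC3, hP5⟩ => ?_⟩
  · exact colorable_three_of_probe hN hC3.cliqueFree_three (hP5.induce_insert_compl hle hF)
  · exact colorable_three_of_probe hN (hC3.cliqueFree_three.anti hle)
      (hP5.induce_insert_compl hle hF)

theorem stmt_0 {V : Type*} [Fintype V] (G : SimpleGraph V) :
    (IndFree (cycleGraph 3) G → (∃ N : Set V, PartProbeFree (pathGraph 5) G N) →
      G.Colorable 3) ∧
    ((∃ N : Set V, (∀ u ∈ N, ∀ v ∈ N, ¬ G.Adj u v) ∧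
        ∃ G' : SimpleGraph V, G ≤ G' ∧
          (∀ u v, G'.Adj u v → ¬ G.Adj u v → u ∈ N ∧ v ∈ N) ∧
          IndFree (cycleGraph 3) G' ∧ IndFree (pathGraph 5) G') →
      G.Colorable 3) :=
  stmt_0_general G
end

section
/- Let G be a connected C3-free graph and let (G,P,N) be a partitioned probe P5-free graph such that G[P] contains an induced cycle C with vertices v1,v2,v3,v4,v5 in this cyclic order. Then every vertex of V(G) not on C has exactly two neighbours on C, and these two neighbours are v_i and v_{i+2} for some i in {1,...,5} (indices taken modulo 5). -/
/-!
Edges of the completion `G'` that are not edges of `G` join two non-probes, so `G` and the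
`P₅`-free graph `G'` agree on every pair meeting the probe cycle `C`. In `G`, triangle-freeness
stops a vertex from seeing two consecutive vertices of `C`; and a vertex `z` seeing `vᵢ` but
neither `vᵢ₊₂` nor `vᵢ₊₃` would start the induced path `z vᵢ vᵢ₊₁ vᵢ₊₂ vᵢ₊₃` of `G'`. Hence a
vertex with a neighbour on `C` sees exactly some pair `vᵢ, vᵢ₊₂`. If a vertex had no neighbour on
`C`, connectivity would give an edge `ux` with `u` seeing nothing on `C` and `x` seeing exactly
`vᵢ, vᵢ₊₂`, and `u x vᵢ vᵢ₋₁ vᵢ₋₂` would be an induced `P₅` of `G'`.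
-/

open SimpleGraph

section InducedSubgraphs

variable {V : Type*} {G : SimpleGraph V} {a b c d e : V}

theorem IndFree.not_adj_of_adj_of_adj (h : IndFree (cycleGraph 3) G) (hab : G.Adj a b)
    (hbc : G.Adj b c) : ¬ G.Adj a c := by
  intro hac
  refine h.false ⟨⟨![a, b, c], ?_⟩, ?_⟩
  · intro x y hxy
    fin_cases x <;> fin_cases y <;> simp at hxy <;> subst_vars <;> simp_all
  · intro x y
    change G.Adj (![a, b, c] x) (![a, b, c] y) ↔ _
    fin_cases x <;> fin_cases y <;> simp [cycleGraph_adj, *, G.adj_comm] <;> decide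

theorem IndFree.false_of_path5 (h : IndFree (pathGraph 5) G)
    (hab : G.Adj a b) (hbc : G.Adj b c) (hcd : G.Adj c d) (hde : G.Adj d e)
    (hac : ¬ G.Adj a c) (had : ¬ G.Adj a d) (hae : ¬ G.Adj a e)
    (hbd : ¬ G.Adj b d) (hbe : ¬ G.Adj b e) (hce : ¬ G.Adj c e) : False := by
  refine h.false ⟨⟨![a, b, c, d, e], ?_⟩, ?_⟩
  · intro x y hxy
    fin_cases x <;> fin_cases y <;> simp at hxy <;> subst_vars <;> simp_all [G.adj_comm]
  · intro x y
    change G.Adj (![a, b, c, d, e] x) (![a, b, c, d, e] y) ↔ _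
    fin_cases x <;> fin_cases y <;> simp [pathGraph_adj, *, G.adj_comm]

end InducedSubgraphs

theorem PartProbeFree.exists_indFree_supergraph {W V : Type*} {H : SimpleGraph W}
    {G : SimpleGraph V} {N : Set V} (h : PartProbeFree H G N) :
    ∃ G' : SimpleGraph V,
      G ≤ G' ∧ (∀ x y, y ∉ N → (G'.Adj x y ↔ G.Adj x y)) ∧ IndFree H G' := by
  obtain ⟨-, G', hle, hnew, hfree⟩ := h
  refine ⟨G', hle, fun x y hy => ⟨fun hxy => ?_, fun hxy => hle hxy⟩, hfree⟩
  by_contra hG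
  exact hy (hnew x y hxy hG).2

theorem Fin.exists_forall_iff_eq_or_eq_add_two (A : Fin 5 → Prop)
    (hconsec : ∀ i, A i → ¬ A (i + 1)) (hgap : ∀ i, A i → A (i + 2) ∨ A (i + 3))
    (hA : ∃ i, A i) : ∃ i, ∀ j, A j ↔ j = i ∨ j = i + 2 := by
  classical
  have key : ∀ b : Fin 5 → Bool, (∀ i, b i → ¬ b (i + 1)) →
      (∀ i, b i → b (i + 2) ∨ b (i + 3)) → (∃ i, b i) →
      ∃ i, ∀ j, b j ↔ j = i ∨ j = i + 2 := by
    decide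
  simpa using key (fun i => decide (A i)) (by simpa using hconsec) (by simpa using hgap)
    (by simpa using hA)

section ProbeCycle

variable {V : Type*} {G G' : SimpleGraph V} {v : Fin 5 → V}

theorem exists_adj_cycle_iff_of_adj (hC3 : IndFree (cycleGraph 3) G)
    (hP5 : IndFree (pathGraph 5) G') (hagree : ∀ x i, G'.Adj x (v i) ↔ G.Adj x (v i))
    (hv : ∀ i j, G.Adj (v i) (v j) ↔ (cycleGraph 5).Adj i j) {z : V}
    (hz : ∃ i, G.Adj z (v i)) : ∃ i, ∀ j, G.Adj z (v j) ↔ j = i ∨ j = i + 2 := by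
  have hconsec : ∀ i, G.Adj z (v i) → ¬ G.Adj z (v (i + 1)) := fun i hi =>
    hC3.not_adj_of_adj_of_adj hi ((hv _ _).2 (by simp [cycleGraph_adj]))
  refine Fin.exists_forall_iff_eq_or_eq_add_two _ hconsec (fun i hi => ?_) hz
  by_contra! hgap
  apply hP5.false_of_path5 (a := z) (b := v i) (c := v (i + 1)) (d := v (i + 2)) (e := v (i + 3))
    <;> simp [hagree, hv, cycleGraph_adj, hi, hconsec i hi, hgap] <;> decide

theorem exists_adj_cycle (hconn : G.Connected) (hle : G ≤ G') (hC3 : IndFree (cycleGraph 3) G)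
    (hP5 : IndFree (pathGraph 5) G') (hagree : ∀ x i, G'.Adj x (v i) ↔ G.Adj x (v i))
    (hv : ∀ i j, G.Adj (v i) (v j) ↔ (cycleGraph 5).Adj i j) (w : V) : ∃ i, G.Adj w (v i) := by
  by_contra hw
  obtain ⟨p⟩ := hconn.preconnected w (v 0)
  obtain ⟨⟨⟨u, x⟩, hux⟩, -, hu, hx⟩ := p.exists_boundary_dart {y | ¬ ∃ i, G.Adj y (v i)} hw
    (by simpa using ⟨1, (hv 0 1).2 (by decide)⟩)
  obtain ⟨i, hi⟩ := exists_adj_cycle_iff_of_adj hC3 hP5 hagree hv (not_not.1 hx)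
  simp only [Set.mem_ofPred_eq, not_exists] at hu
  apply hP5.false_of_path5 (hle hux) (c := v i) (d := v (i + 4)) (e := v (i + 3))
    <;> simp [hagree, hv, hi, hu, cycleGraph_adj] <;> decide

end ProbeCycle

theorem stmt_1_general {V : Type*} (G : SimpleGraph V) (P N : Set V)
    (hPN : P = Nᶜ)
    (hconn : G.Connected)
    (hC3 : IndFree (cycleGraph 3) G)
    (hprobe : PartProbeFree (pathGraph 5) G N)
    (v : Fin 5 → V)
    (hvP : ∀ i, v i ∈ P)
    (hind : ∀ i j, G.Adj (v i) (v j) ↔ (cycleGraph 5).Adj i j) :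
    ∀ w : V, w ∉ Set.range v →
      ∃ i : Fin 5, ∀ j : Fin 5, G.Adj w (v j) ↔ (j = i ∨ j = i + 2) := by
  obtain ⟨G', hle, hprobeAdj, hP5⟩ := hprobe.exists_indFree_supergraph
  have hagree : ∀ x i, G'.Adj x (v i) ↔ G.Adj x (v i) := fun x i =>
    hprobeAdj x (v i) (by simpa [hPN] using hvP i)
  intro w _
  exact exists_adj_cycle_iff_of_adj hC3 hP5 hagree hind
    (exists_adj_cycle hconn hle hC3 hP5 hagree hind w)

theorem stmt_1 {V : Type*} [Fintype V] (G : SimpleGraph V) (P N : Set V)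
    (hPN : P = Nᶜ)
    (hconn : G.Connected)
    (hC3 : IndFree (cycleGraph 3) G)
    (hprobe : PartProbeFree (pathGraph 5) G N)
    (v : Fin 5 → V) (hinj : Function.Injective v)
    (hvP : ∀ i, v i ∈ P)
    (hind : ∀ i j, G.Adj (v i) (v j) ↔ (cycleGraph 5).Adj i j) :
    ∀ w : V, w ∉ Set.range v →
      ∃ i : Fin 5, ∀ j : Fin 5, G.Adj w (v j) ↔ (j = i ∨ j = i + 2) :=
  stmt_1_general G P N hPN hconn hC3 hprobe v hvP hind
end

section
/- Let (G,P,N) be a partitioned probe P5-free graph, and let K_1,...,K_t be the connected components of G[P] that contain at least one edge. Then every vertex of N that is neither complete nor anticomplete to K_i for some i in [t] is complete or anticomplete to K_j for every j in [t] with j ≠ i. -/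
/-! If `v` saw a mixed edge `ab` of `K` (`v ~ a`, `v ≁ b`) and a mixed edge `a'b'` of `K'`, then
`b a v a' b'` would be an induced `P₅` in every completion `G + F`: the edges of `F` join two
non-probes, while `b, a, a', b'` are probes and `K`, `K'` are distinct components of `G[P]`, so no
pair outside the path is an edge of `G + F`. -/

open SimpleGraph

/-- `K` is the vertex set of a connected component of the subgraph of `G` induced by `P`. -/
def IsCompOf {V : Type*} (G : SimpleGraph V) (P K : Set V) : Prop :=
  K ⊆ P ∧ (G.induce K).Connected ∧ ∀ u ∈ K, ∀ w ∈ P, G.Adj u w → w ∈ K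

namespace SimpleGraph

variable {V W : Type*} {G : SimpleGraph V}

lemma injective_of_adj_iff {H : SimpleGraph W}
    (hH : ∀ i j, (∀ k, H.Adj i k ↔ H.Adj j k) → i = j) {f : W → V}
    (hf : ∀ i j, G.Adj (f i) (f j) ↔ H.Adj i j) : Function.Injective f :=
  fun i j hij => hH i j fun k => by rw [← hf, ← hf, hij]

lemma pathGraph_five_eq_of_adj_iff :
    ∀ i j : Fin 5, (∀ k, (pathGraph 5).Adj i k ↔ (pathGraph 5).Adj j k) → i = j := by
  simp only [pathGraph_adj]
  decide

lemma IndFree.not_induced_path_five (hG : IndFree (pathGraph 5) G) {x₀ x₁ x₂ x₃ x₄ : V}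
    (h₀₁ : G.Adj x₀ x₁) (h₁₂ : G.Adj x₁ x₂) (h₂₃ : G.Adj x₂ x₃) (h₃₄ : G.Adj x₃ x₄)
    (h₀₂ : ¬ G.Adj x₀ x₂) (h₀₃ : ¬ G.Adj x₀ x₃) (h₀₄ : ¬ G.Adj x₀ x₄)
    (h₁₃ : ¬ G.Adj x₁ x₃) (h₁₄ : ¬ G.Adj x₁ x₄) (h₂₄ : ¬ G.Adj x₂ x₄) : False := by
  let f : Fin 5 → V := ![x₀, x₁, x₂, x₃, x₄]
  have hf : ∀ i j, G.Adj (f i) (f j) ↔ (pathGraph 5).Adj i j := by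
    intro i j
    fin_cases i <;> fin_cases j <;> simp [f, pathGraph_adj, G.adj_comm, *]
  exact hG.false ⟨⟨f, injective_of_adj_iff pathGraph_five_eq_of_adj_iff hf⟩, hf _ _⟩

lemma exists_adj_not_adj_of_connected_induce {K : Set V} (hK : (G.induce K).Connected) {v : V}
    (hadj : ∃ x ∈ K, G.Adj v x) (hnadj : ∃ y ∈ K, ¬ G.Adj v y) :
    ∃ a ∈ K, ∃ b ∈ K, G.Adj a b ∧ G.Adj v a ∧ ¬ G.Adj v b := by
  obtain ⟨x, hx, hvx⟩ := hadj
  obtain ⟨y, hy, hvy⟩ := hnadj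
  obtain ⟨p⟩ := hK ⟨x, hx⟩ ⟨y, hy⟩
  obtain ⟨d, -, hva, hvb⟩ := p.exists_boundary_dart {z | G.Adj v z} hvx hvy
  exact ⟨d.fst, d.fst.2, d.snd, d.snd.2, d.adj, hva, hvb⟩

lemma adj_of_adj_of_notMem {G' : SimpleGraph V} {N : Set V}
    (hG' : ∀ u w, G'.Adj u w → ¬ G.Adj u w → u ∈ N ∧ w ∈ N) {u w : V} (hu : u ∉ N)
    (h : G'.Adj u w) : G.Adj u w :=
  by_contra fun hG => hu (hG' u w h hG).1

end SimpleGraph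

section IsCompOf

variable {V : Type*} {G : SimpleGraph V} {P K L : Set V}

lemma IsCompOf.subset_of_mem (hK : IsCompOf G P K) (hL : IsCompOf G P L) {x : V} (hxK : x ∈ K)
    (hxL : x ∈ L) : K ⊆ L := by
  intro u hu
  by_contra huL
  obtain ⟨p⟩ := hK.2.1 ⟨x, hxK⟩ ⟨u, hu⟩
  obtain ⟨d, -, ha, hb⟩ := p.exists_boundary_dart {z : K | (z : V) ∈ L} hxL huL
  exact hb (hL.2.2 _ ha _ (hK.1 d.snd.2) d.adj)

lemma IsCompOf.not_adj_of_ne (hK : IsCompOf G P K) (hL : IsCompOf G P L) (hKL : K ≠ L)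
    {u w : V} (hu : u ∈ K) (hw : w ∈ L) : ¬ G.Adj u w := fun huw =>
  have hu' : u ∈ L := hL.2.2 w hw u (hK.1 hu) huw.symm
  hKL ((hK.subset_of_mem hL hu hu').antisymm (hL.subset_of_mem hK hu' hu))

end IsCompOf

theorem stmt_2_general {V : Type*} (G : SimpleGraph V) (P N : Set V)
    (hPN : P = Nᶜ)
    (hprobe : PartProbeFree (pathGraph 5) G N)
    (K K' : Set V)
    (hK : IsCompOf G P K)
    (hK' : IsCompOf G P K')
    (hKK' : K ≠ K')
    (v : V)
    (hnotcomp : ¬ ∀ w ∈ K, G.Adj v w)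
    (hnotanti : ¬ ∀ w ∈ K, ¬ G.Adj v w) :
    (∀ w ∈ K', G.Adj v w) ∨ (∀ w ∈ K', ¬ G.Adj v w) := by
  by_contra hmixed
  push Not at hmixed hnotcomp hnotanti
  obtain ⟨hnotcomp', hnotanti'⟩ := hmixed
  obtain ⟨a, ha, b, hb, hab, hva, hvb⟩ :=
    exists_adj_not_adj_of_connected_induce hK.2.1 hnotanti hnotcomp
  obtain ⟨a', ha', b', hb', hab', hva', hvb'⟩ :=
    exists_adj_not_adj_of_connected_induce hK'.2.1 hnotanti' hnotcomp'
  obtain ⟨-, G', hle, hG', hfree⟩ := hprobe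
  have probe {u w : V} (hu : u ∈ P) : G'.Adj u w → G.Adj u w :=
    adj_of_adj_of_notMem hG' (show u ∈ Nᶜ from hPN ▸ hu)
  have across {u w : V} (hu : u ∈ K) (hw : w ∈ K') : ¬ G'.Adj u w := fun h =>
    hK.not_adj_of_ne hK' hKK' hu hw (probe (hK.1 hu) h)
  exact hfree.not_induced_path_five (hle hab.symm) (hle hva.symm) (hle hva') (hle hab')
    (fun h => hvb (probe (hK.1 hb) h).symm) (across hb ha') (across hb hb') (across ha ha')
    (across ha hb') (fun h => hvb' (probe (hK'.1 hb') h.symm).symm)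

theorem stmt_2 {V : Type*} [Fintype V] (G : SimpleGraph V) (P N : Set V)
    (hPN : P = Nᶜ)
    (hprobe : PartProbeFree (pathGraph 5) G N)
    (K K' : Set V)
    (hK : IsCompOf G P K) (hKedge : ∃ u ∈ K, ∃ w ∈ K, G.Adj u w)
    (hK' : IsCompOf G P K') (hK'edge : ∃ u ∈ K', ∃ w ∈ K', G.Adj u w)
    (hKK' : K ≠ K')
    (v : V) (hv : v ∈ N)
    (hnotcomp : ¬ ∀ w ∈ K, G.Adj v w)
    (hnotanti : ¬ ∀ w ∈ K, ¬ G.Adj v w) :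
    (∀ w ∈ K', G.Adj v w) ∨ (∀ w ∈ K', ¬ G.Adj v w) :=
  stmt_2_general G P N hPN hprobe K K' hK hK' hKK' v hnotcomp hnotanti
end

section
/- Let (G,P,N) be a connected partitioned probe P5-free graph, let K_1,...,K_t be the connected components of G[P] that contain at least one edge, and let C be an induced cycle in K_1 such that no vertex of V(G)\V(C) is adjacent to every vertex of C. Let u ∈ N be a vertex with no neighbour in K_1. If u has a neighbour in K_i for some i ≥ 2, then some vertex of N that has a neighbour in K_1 is complete to K_i. -/
open SimpleGraph

/-!
Work in a `P₅`-free filling `G'` of `G` and let `D` be the set of neighbours of the cycle `C`.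
A vertex of `D` with a neighbour outside `D` is not on `C`, so it is adjacent to some but not all
of `C` and hence splits an edge `c_i c_j` of `C`. A vertex `v ∈ D` nearest to `u` is adjacent to
`u`, since otherwise the two vertices preceding it on a geodesic from `u` extend `v c_i c_j` to an
induced `P₅`. This `v` is a non-probe (a probe would lie in `K₁`), and it is complete to `Kᵢ`:
otherwise an edge `pq` of `Kᵢ` with `v ~ p`, `v ≁ q`, or a neighbour `z` of `u` in `Kᵢ`, gives an
induced `P₅` `q p v c_i c_j` or `z u v c_i c_j`.
-/

namespace SimpleGraph

variable {ι V : Type*}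

theorem Preconnected.exists_adj_mem_not_mem {T : SimpleGraph ι} (hT : T.Preconnected)
    {S : Set ι} {a b : ι} (ha : a ∈ S) (hb : b ∉ S) : ∃ i j, T.Adj i j ∧ i ∈ S ∧ j ∉ S := by
  obtain ⟨p⟩ := hT a b
  obtain ⟨d, -, hd⟩ := p.exists_boundary_dart S ha hb
  exact ⟨d.fst, d.snd, d.adj, hd⟩

theorem Connected.exists_adj_dist_add_one {G : SimpleGraph V} (hG : G.Connected) {u v : V}
    (huv : u ≠ v) : ∃ w, G.Adj w v ∧ G.dist u w + 1 = G.dist u v := by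
  obtain ⟨p, hp⟩ := hG.exists_walk_length_eq_dist v u
  cases p with
  | nil => exact absurd rfl huv
  | cons hvw q =>
    refine ⟨_, hvw.symm, le_antisymm ?_ ?_⟩
    · rw [dist_comm (u := u) (v := v), ← hp, Walk.length_cons, dist_comm]
      exact Nat.add_le_add_right (dist_le q) 1
    · calc G.dist u v ≤ G.dist u _ + G.dist _ v := hG.dist_triangle
        _ = _ := by rw [dist_eq_one_iff_adj.mpr hvw.symm]

end SimpleGraph

section PathFive

variable {ι V : Type*} {H : SimpleGraph V}

theorem IndFree.false_of_path5_s3 (hfree : IndFree (pathGraph 5) H)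
    {a b x y z : V} (hab : H.Adj a b) (hbx : H.Adj b x) (hxy : H.Adj x y) (hyz : H.Adj y z)
    (hax : ¬ H.Adj a x) (hay : ¬ H.Adj a y) (haz : ¬ H.Adj a z)
    (hby : ¬ H.Adj b y) (hbz : ¬ H.Adj b z) (hxz : ¬ H.Adj x z) : False := by
  let f : Fin 5 → V := ![a, b, x, y, z]
  have hf : Function.Injective f := by
    intro i j hij
    fin_cases i <;> fin_cases j <;> simp_all [f, H.adj_comm]
  refine hfree.elim' ⟨⟨f, hf⟩, fun {i j} => ?_⟩
  fin_cases i <;> fin_cases j <;>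
    simp [f, pathGraph_adj, H.adj_comm, *]

theorem IndFree.exists_adj_adj_not_adj_of_hom (hfree : IndFree (pathGraph 5) H)
    (hH : H.Connected) {T : SimpleGraph ι} (f : T →g H) (hT : T.Preconnected)
    (hTedge : ∃ i j, T.Adj i j) (hdom : ∀ w ∉ Set.range f, ¬ ∀ i, H.Adj w (f i))
    {u : V} (hu : ∀ i, ¬ H.Adj u (f i)) :
    ∃ v, H.Adj u v ∧ ∃ i j, H.Adj v (f i) ∧ ¬ H.Adj v (f j) ∧ H.Adj (f i) (f j) := by
  set D : Set V := {w | ∃ i, H.Adj w (f i)}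
  have hsplit : ∀ w ∈ D, ∀ w' ∉ D, H.Adj w' w →
      ∃ i j, H.Adj w (f i) ∧ ¬ H.Adj w (f j) ∧ H.Adj (f i) (f j) := by
    rintro w ⟨i₀, hi₀⟩ w' hw' hw'w
    have hw : w ∉ Set.range f := by
      rintro ⟨k, rfl⟩
      exact hw' ⟨k, hw'w⟩
    obtain ⟨j₀, hj₀⟩ := not_forall.mp (hdom w hw)
    obtain ⟨i, j, hij, hi, hj⟩ :=
      hT.exists_adj_mem_not_mem (S := {k | H.Adj w (f k)}) hi₀ hj₀
    exact ⟨i, j, hi, hj, f.map_adj hij⟩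
  obtain ⟨i, j, hij⟩ := hTedge
  obtain ⟨v, hvD, hmin⟩ : ∃ v ∈ D, ∀ w ∈ D, H.dist u v ≤ H.dist u w :=
    ⟨_, Function.argminOn_mem _ D ⟨f i, j, f.map_adj hij⟩,
      fun w hw => Function.argminOn_le _ D hw⟩
  have huD : u ∉ D := fun ⟨k, hk⟩ => hu k hk
  have hlt : ∀ w, H.dist u w < H.dist u v → w ∉ D := fun w hw hwD => (hmin w hwD).not_gt hw
  obtain ⟨w₁, hw₁v, hw₁⟩ := hH.exists_adj_dist_add_one (fun huv : u = v => huD (huv ▸ hvD))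
  by_cases hw₁u : w₁ = u
  · subst hw₁u
    exact ⟨v, hw₁v, hsplit v hvD w₁ huD hw₁v⟩
  -- Otherwise `w₂ - w₁ - v - f i - f j` would be an induced `P₅`.
  exfalso
  obtain ⟨w₂, hw₂w₁, hw₂⟩ := hH.exists_adj_dist_add_one (Ne.symm hw₁u)
  have hw₁D := hlt w₁ (by omega)
  have hw₂D := hlt w₂ (by omega)
  obtain ⟨i, j, hvi, hvj, hij⟩ := hsplit v hvD w₁ hw₁D hw₁v
  have hw₂v : ¬ H.Adj w₂ v := fun h => by
    have := hH.dist_triangle (u := u) (v := w₂) (w := v)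
    rw [dist_eq_one_iff_adj.mpr h] at this
    omega
  exact hfree.false_of_path5_s3 hw₂w₁ hw₁v hvi hij hw₂v (fun h => hw₂D ⟨i, h⟩)
    (fun h => hw₂D ⟨j, h⟩) (fun h => hw₁D ⟨i, h⟩) (fun h => hw₁D ⟨j, h⟩) hvj

theorem IndFree.forall_adj_of_adj_adj_not_adj (hfree : IndFree (pathGraph 5) H)
    {K : Set V} (hK : (H.induce K).Preconnected) {u v x y : V} (huv : H.Adj u v)
    (hvx : H.Adj v x) (hvy : ¬ H.Adj v y) (hxy : H.Adj x y)
    (hux : ¬ H.Adj u x) (huy : ¬ H.Adj u y)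
    (hKx : ∀ w ∈ K, ¬ H.Adj w x) (hKy : ∀ w ∈ K, ¬ H.Adj w y) (huK : ∃ w ∈ K, H.Adj u w) :
    ∀ w ∈ K, H.Adj v w := by
  intro b hb
  by_contra hvb
  by_cases hvK : ∃ a ∈ K, H.Adj v a
  · obtain ⟨a, ha, hva⟩ := hvK
    obtain ⟨p, q, hpq, hp, hq⟩ := hK.exists_adj_mem_not_mem
      (S := {w : K | H.Adj v w}) (a := ⟨a, ha⟩) (b := ⟨b, hb⟩) hva hvb
    exact hfree.false_of_path5_s3 hpq.symm hp.symm hvx hxy (fun h => hq h.symm) (hKx q q.2)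
      (hKy q q.2) (hKx p p.2) (hKy p p.2) hvy
  · obtain ⟨z, hz, huz⟩ := huK
    exact hfree.false_of_path5_s3 huz.symm huv hvx hxy (fun h => hvK ⟨z, hz, h.symm⟩) (hKx z hz)
      (hKy z hz) hux huy hvy

end PathFive

theorem PartProbeFree.exists_le_indFree {W V : Type*} {H : SimpleGraph W} {G : SimpleGraph V} {N : Set V}
    (h : PartProbeFree H G N) :
    ∃ G' : SimpleGraph V, G ≤ G' ∧ (∀ v w, w ∉ N → (G'.Adj v w ↔ G.Adj v w)) ∧ IndFree H G' := by
  obtain ⟨-, G', hle, hfill, hfree⟩ := h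
  exact ⟨G', hle, fun v w hw => ⟨fun h => by_contra fun h' => hw (hfill v w h h').2,
    fun h => hle h⟩, hfree⟩

section IsCompOf

variable {V : Type*} {G : SimpleGraph V} {P K K' : Set V}

theorem IsCompOf.subset_of_mem_s3 (hK : IsCompOf G P K) (hK' : IsCompOf G P K') {v : V}
    (hvK : v ∈ K) (hvK' : v ∈ K') : K ⊆ K' := by
  intro w hw
  by_contra hwK'
  obtain ⟨x, y, hxy, hx, hy⟩ := hK.2.1.preconnected.exists_adj_mem_not_mem
    (S := {z : K | (z : V) ∈ K'}) (a := ⟨v, hvK⟩) (b := ⟨w, hw⟩) hvK' hwK'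
  exact hy (hK'.2.2 x hx y (hK.1 y.2) hxy)

theorem IsCompOf.not_adj_of_ne_s3 (hK : IsCompOf G P K) (hK' : IsCompOf G P K') (hne : K ≠ K')
    {a b : V} (ha : a ∈ K) (hb : b ∈ K') : ¬ G.Adj a b := fun hab =>
  have hbK : b ∈ K := hK.2.2 a ha b (hK'.1 hb) hab
  hne ((hK.subset_of_mem_s3 hK' hbK hb).antisymm (hK'.subset_of_mem_s3 hK hb hbK))

end IsCompOf

theorem stmt_3_general {V : Type*} (G : SimpleGraph V) (P N : Set V)
    (hPN : P = Nᶜ)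
    (hconn : G.Connected)
    (hprobe : PartProbeFree (pathGraph 5) G N)
    (K₁ Kᵢ : Set V)
    (hK₁ : IsCompOf G P K₁)
    (hKᵢ : IsCompOf G P Kᵢ)
    (hne : K₁ ≠ Kᵢ)
    -- `C` is an induced cycle in `K₁` ...
    (n : ℕ) (hn : 3 ≤ n) (c : Fin n → V)
    (hcK₁ : ∀ i, c i ∈ K₁)
    (hcind : ∀ i j, G.Adj (c i) (c j) ↔ (cycleGraph n).Adj i j)
    -- ... such that no vertex outside `C` is adjacent to every vertex of `C`
    (hnodom : ∀ w : V, w ∉ Set.range c → ¬ ∀ i, G.Adj w (c i))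
    (u : V)
    (huK₁ : ∀ w ∈ K₁, ¬ G.Adj u w)
    (huKᵢ : ∃ w ∈ Kᵢ, G.Adj u w) :
    ∃ x ∈ N, (∃ w ∈ K₁, G.Adj x w) ∧ ∀ w ∈ Kᵢ, G.Adj x w := by
  obtain ⟨n, rfl⟩ : ∃ m, n = m + 3 := ⟨n - 3, by omega⟩
  obtain ⟨G', hle, hadj_iff, hfree⟩ := hprobe.exists_le_indFree
  have hK₁N : ∀ w ∈ K₁, w ∉ N := fun w hw => hPN.le (hK₁.1 hw)
  have hKᵢN : ∀ w ∈ Kᵢ, w ∉ N := fun w hw => hPN.le (hKᵢ.1 hw)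
  have hc : ∀ w i, G'.Adj w (c i) ↔ G.Adj w (c i) := fun w i => hadj_iff w _ (hK₁N _ (hcK₁ i))
  have huc : ∀ i, ¬ G'.Adj u (c i) := fun i h => huK₁ _ (hcK₁ i) ((hc u i).1 h)
  have hKᵢc : ∀ i, ∀ w ∈ Kᵢ, ¬ G'.Adj w (c i) := fun i w hw h =>
    hK₁.not_adj_of_ne_s3 hKᵢ hne (hcK₁ i) hw ((hc w i).1 h).symm
  obtain ⟨v, huv, i, j, hvi, hvj, hij⟩ := hfree.exists_adj_adj_not_adj_of_hom (hconn.mono hle)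
    (T := cycleGraph (n + 3)) ⟨c, fun h => hle ((hcind _ _).2 h)⟩ cycleGraph_preconnected
    ⟨0, 1, by simp [cycleGraph_adj]⟩ (fun w hw h => hnodom w hw fun i => (hc w i).1 (h i)) huc
  have hvN : v ∈ N := by
    by_contra hvN
    have hvK₁ : v ∈ K₁ := hK₁.2.2 _ (hcK₁ i) v (hPN.ge hvN) ((hc v i).1 hvi).symm
    exact huK₁ v hvK₁ ((hadj_iff u v hvN).1 huv)
  refine ⟨v, hvN, ⟨c i, hcK₁ i, (hc v i).1 hvi⟩, fun w hw => (hadj_iff v w (hKᵢN w hw)).1 ?_⟩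
  exact hfree.forall_adj_of_adj_adj_not_adj (hKᵢ.2.1.preconnected.mono fun _ _ h => hle h)
    huv hvi hvj hij (huc i) (huc j) (hKᵢc i) (hKᵢc j)
    (huKᵢ.imp fun _ ⟨hw, h⟩ => ⟨hw, hle h⟩) w hw

theorem stmt_3 {V : Type*} [Fintype V] (G : SimpleGraph V) (P N : Set V)
    (hPN : P = Nᶜ)
    (hconn : G.Connected)
    (hprobe : PartProbeFree (pathGraph 5) G N)
    (K₁ Kᵢ : Set V)
    (hK₁ : IsCompOf G P K₁) (hK₁edge : ∃ u ∈ K₁, ∃ w ∈ K₁, G.Adj u w)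
    (hKᵢ : IsCompOf G P Kᵢ) (hKᵢedge : ∃ u ∈ Kᵢ, ∃ w ∈ Kᵢ, G.Adj u w)
    (hne : K₁ ≠ Kᵢ)
    -- `C` is an induced cycle in `K₁` ...
    (n : ℕ) (hn : 3 ≤ n) (c : Fin n → V) (hcinj : Function.Injective c)
    (hcK₁ : ∀ i, c i ∈ K₁)
    (hcind : ∀ i j, G.Adj (c i) (c j) ↔ (cycleGraph n).Adj i j)
    -- ... such that no vertex outside `C` is adjacent to every vertex of `C`
    (hnodom : ∀ w : V, w ∉ Set.range c → ¬ ∀ i, G.Adj w (c i))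
    (u : V) (hu : u ∈ N)
    (huK₁ : ∀ w ∈ K₁, ¬ G.Adj u w)
    (huKᵢ : ∃ w ∈ Kᵢ, G.Adj u w) :
    ∃ x ∈ N, (∃ w ∈ K₁, G.Adj x w) ∧ ∀ w ∈ Kᵢ, G.Adj x w :=
  stmt_3_general G P N hPN hconn hprobe K₁ Kᵢ hK₁ hKᵢ hne n hn c hcK₁ hcind hnodom u huK₁ huKᵢ
end

section
/- For every integer ℓ ≥ 3, the cycle C_{2ℓ+1} on 2ℓ+1 vertices is probe P6-free. -/
open SimpleGraph

/-- `G` is a probe `H`-free graph (for some choice of non-probes). -/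
def ProbeFree {W V : Type*} (H : SimpleGraph W) (G : SimpleGraph V) : Prop :=
  ∃ N : Set V, PartProbeFree H G N

/-!
Take the odd vertices of `C_n` as non-probes and complete them to a clique. They are independent
in `C_n`, and in the completed graph the even vertices span at most the one edge `{0, n - 1}`.
An induced `P₆` meets a clique in at most two consecutive vertices, so it has two distinct edges
avoiding the clique, and both would have to be that edge.
-/

section Completion

variable {V : Type*}

def cliqueOn (N : Set V) : SimpleGraph V :=
  SimpleGraph.fromRel fun u v => u ∈ N ∧ v ∈ N

lemma cliqueOn_adj {N : Set V} {u v : V} : (cliqueOn N).Adj u v ↔ u ≠ v ∧ u ∈ N ∧ v ∈ N := by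
  simp only [cliqueOn, fromRel_adj, and_comm (a := v ∈ N), or_self]

variable (G : SimpleGraph V) (N : Set V)

lemma isClique_sup_cliqueOn : (G ⊔ cliqueOn N).IsClique N :=
  fun _ hu _ hv huv => Or.inr (cliqueOn_adj.2 ⟨huv, hu, hv⟩)

variable {G N}

lemma sup_cliqueOn_adj_of_notMem {u v : V} (h : (G ⊔ cliqueOn N).Adj u v) (hu : u ∉ N) :
    G.Adj u v :=
  h.resolve_right fun h' => hu (cliqueOn_adj.1 h').2.1

lemma partProbeFree_of_indFree_sup_cliqueOn {W : Type*} {H : SimpleGraph W}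
    (hN : ∀ u ∈ N, ∀ v ∈ N, ¬ G.Adj u v) (hfree : IndFree H (G ⊔ cliqueOn N)) :
    PartProbeFree H G N :=
  ⟨hN, G ⊔ cliqueOn N, le_sup_left,
    fun _ _ h hG => (cliqueOn_adj.1 (h.resolve_left hG)).2, hfree⟩

end Completion

lemma pathGraph_six_two_edges_avoid_clique (q : Fin 6 → Bool)
    (hq : ∀ i j, q i → q j → i ≠ j → (pathGraph 6).Adj i j) :
    ∃ i j : Fin 5, i ≠ j ∧ q i.castSucc = false ∧ q i.succ = false ∧
      q j.castSucc = false ∧ q j.succ = false := by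
  revert q
  simp only [pathGraph_adj]
  decide

lemma Fin.sym2_castSucc_succ_injective {n : ℕ} :
    Function.Injective fun i : Fin n => s(i.castSucc, i.succ) := by
  intro i j h
  simp only [Sym2.eq_iff, Fin.ext_iff, Fin.val_castSucc, Fin.val_succ] at h
  omega

lemma indFree_pathGraph_six_of_isClique {V : Type*} {G : SimpleGraph V} {S : Set V}
    (hS : G.IsClique S)
    (hSc : ∀ ⦃a b c d⦄, a ∉ S → b ∉ S → c ∉ S → d ∉ S → G.Adj a b → G.Adj c d →
      s(a, b) = s(c, d)) :
    IndFree (pathGraph 6) G := by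
  classical
  refine ⟨fun f => ?_⟩
  obtain ⟨i, j, hij, hi₀, hi₁, hj₀, hj₁⟩ :=
    pathGraph_six_two_edges_avoid_clique (fun k => decide (f k ∈ S))
      fun k k' hk hk' hkk' => f.map_adj_iff.1 <|
        hS (of_decide_eq_true hk) (of_decide_eq_true hk') (f.injective.ne hkk')
  simp only [decide_eq_false_iff_not] at hi₀ hi₁ hj₀ hj₁
  have hadj : ∀ k : Fin 5, G.Adj (f k.castSucc) (f k.succ) := fun k =>
    f.map_adj_iff.2 (pathGraph_adj.2 (Or.inl (by simp)))
  have hedge : s(i.castSucc, i.succ) = s(j.castSucc, j.succ) := by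
    apply Sym2.map.injective f.injective
    simpa using hSc hi₀ hi₁ hj₀ hj₁ (hadj i) (hadj j)
  exact hij (Fin.sym2_castSucc_succ_injective hedge)

section Cycle

variable {n : ℕ}

lemma Fin.val_eq_succ_of_val_sub_eq_one {a b : Fin n} (h : (a - b).val = 1) :
    a.val = b.val + 1 ∨ (a.val = 0 ∧ b.val + 1 = n) := by
  rcases le_or_gt b a with hba | hab
  · rw [Fin.coe_sub_iff_le.2 hba] at h
    omega
  · rw [Fin.coe_sub_iff_lt.2 hab] at h
    omega

lemma cycleGraph_adj_val {u v : Fin n} (h : (cycleGraph n).Adj u v) :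
    u.val + 1 = v.val ∨ v.val + 1 = u.val ∨
      (u.val = 0 ∧ v.val + 1 = n) ∨ (v.val = 0 ∧ u.val + 1 = n) := by
  rcases cycleGraph_adj'.1 h with h | h <;>
    rcases Fin.val_eq_succ_of_val_sub_eq_one h with h | h <;> omega

lemma cycleGraph_not_adj_of_odd {u v : Fin n} (hu : Odd u.val) (hv : Odd v.val) :
    ¬ (cycleGraph n).Adj u v := by
  intro h
  obtain ⟨a, ha⟩ := hu
  obtain ⟨b, hb⟩ := hv
  rcases cycleGraph_adj_val h with h | h | h | h <;> omega

lemma cycleGraph_adj_of_even {u v : Fin n} (hu : Even u.val) (hv : Even v.val)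
    (h : (cycleGraph n).Adj u v) : (u.val = 0 ∧ v.val + 1 = n) ∨ (v.val = 0 ∧ u.val + 1 = n) := by
  obtain ⟨a, ha⟩ := hu
  obtain ⟨b, hb⟩ := hv
  rcases cycleGraph_adj_val h with h | h | h | h <;> omega

lemma cycleGraph_even_edge_unique {a b c d : Fin n} (ha : Even a.val) (hb : Even b.val)
    (hc : Even c.val) (hd : Even d.val) (hab : (cycleGraph n).Adj a b)
    (hcd : (cycleGraph n).Adj c d) : s(a, b) = s(c, d) := by
  simp only [Sym2.eq_iff, Fin.ext_iff]
  rcases cycleGraph_adj_of_even ha hb hab with h | h <;>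
    rcases cycleGraph_adj_of_even hc hd hcd with h' | h' <;> omega

end Cycle

theorem probeFree_pathGraph_six_cycleGraph (n : ℕ) :
    ProbeFree (pathGraph 6) (cycleGraph n) := by
  refine ⟨{v | Odd v.val}, partProbeFree_of_indFree_sup_cliqueOn
    (fun u hu v hv => cycleGraph_not_adj_of_odd hu hv) ?_⟩
  refine indFree_pathGraph_six_of_isClique (isClique_sup_cliqueOn _ _) ?_
  intro a b c d ha hb hc hd hab hcd
  exact cycleGraph_even_edge_unique (Nat.not_odd_iff_even.1 ha) (Nat.not_odd_iff_even.1 hb)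
    (Nat.not_odd_iff_even.1 hc) (Nat.not_odd_iff_even.1 hd)
    (sup_cliqueOn_adj_of_notMem hab ha) (sup_cliqueOn_adj_of_notMem hcd hc)

theorem stmt_9_general (ℓ : ℕ) :
    ProbeFree (pathGraph 6) (cycleGraph (2 * ℓ + 1)) :=
  probeFree_pathGraph_six_cycleGraph _

theorem stmt_9 (ℓ : ℕ) (hℓ : 3 ≤ ℓ) :
    ProbeFree (pathGraph 6) (cycleGraph (2 * ℓ + 1)) :=
  stmt_9_general ℓ
end

section
/- Let L be the graph on ten vertices u1,...,u5,u1',...,u5' whose edges are: u_i u_{i+1} and u_i' u_{i+1}' for 1 ≤ i ≤ 4; u_i u_i' for 1 ≤ i ≤ 5; and u_i u_{i+1}' and u_i' u_{i+1} for 1 ≤ i ≤ 4. Then L contains no induced cycle of odd length at least 7 (i.e., L is C_{2ℓ+1}-free for every ℓ ≥ 3), but L is not probe P5-free. -/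
open SimpleGraph

/-- The graph `L` on ten vertices: `uᵢ = (i, 0)` and `uᵢ' = (i, 1)` for `i = 0, ..., 4`.
Two distinct vertices `(i, a)` and `(j, b)` are adjacent iff `|i - j| = 1` or `i = j`;
this gives exactly the edges `uᵢuᵢ₊₁`, `uᵢ'uᵢ₊₁'`, `uᵢuᵢ'`, `uᵢuᵢ₊₁'` and `uᵢ'uᵢ₊₁`. -/
def graphL : SimpleGraph (Fin 5 × Fin 2) :=
  SimpleGraph.fromRel (fun p q => (p.1 : ℕ) + 1 = (q.1 : ℕ) ∨ p.1 = q.1)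

/-
The two vertices of a column of `L` are true twins: adjacent, with the same other neighbours.
Induced subgraphs inherit true twins, and a cycle of length at least four has none, so an induced
cycle meets each of the five columns at most once. For the second part, an independent set `N` of
non-probes misses a vertex in every column; these probes induce a `P₅`, and edges added inside `N`
do not touch it.
-/

namespace SimpleGraph

variable {V W : Type*}

def AreTrueTwins (G : SimpleGraph V) (u v : V) : Prop :=
  G.Adj u v ∧ ∀ w, w ≠ u → w ≠ v → (G.Adj u w ↔ G.Adj v w)

theorem AreTrueTwins.symm {G : SimpleGraph V} {u v : V} (h : G.AreTrueTwins u v) :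
    G.AreTrueTwins v u :=
  ⟨h.1.symm, fun w hwv hwu => (h.2 w hwu hwv).symm⟩

theorem AreTrueTwins.comap {G : SimpleGraph V} {H : SimpleGraph W} (e : H ↪g G) {x y : W}
    (h : G.AreTrueTwins (e x) (e y)) : H.AreTrueTwins x y := by
  refine ⟨e.map_adj_iff.mp h.1, fun z hzx hzy => ?_⟩
  rw [← e.map_adj_iff, ← e.map_adj_iff]
  exact h.2 (e z) (e.injective.ne hzx) (e.injective.ne hzy)

open Fin.CommRing in
theorem cycleGraph_not_areTrueTwins_add_one {n : ℕ} (x : Fin (n + 4)) :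
    ¬ (cycleGraph (n + 4)).AreTrueTwins x (x + 1) := by
  rintro ⟨-, htwin⟩
  have hk : ∀ k : ℕ, k < n + 4 → k ≠ 0 → (k : Fin (n + 4)) ≠ 0 := fun k hk hk0 => by
    simp [Fin.ext_iff, Nat.mod_eq_of_lt hk, hk0]
  have hx : x - 1 ≠ x := fun h => hk 1 (by omega) one_ne_zero (by
    push_cast; linear_combination -h)
  have hx1 : x - 1 ≠ x + 1 := fun h => hk 2 (by omega) two_ne_zero (by
    push_cast; linear_combination -h)
  have hadj := (htwin (x - 1) hx hx1).mp (by simp [cycleGraph_adj])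
  rw [cycleGraph_adj] at hadj
  rcases hadj with h | h
  · exact hk 1 (by omega) one_ne_zero (by push_cast; linear_combination h)
  · exact hk 3 (by omega) three_ne_zero (by push_cast; linear_combination -h)

theorem cycleGraph_not_areTrueTwins {n : ℕ} (hn : 4 ≤ n) (x y : Fin n) :
    ¬ (cycleGraph n).AreTrueTwins x y := by
  obtain ⟨n, rfl⟩ : ∃ m, n = m + 4 := ⟨n - 4, by omega⟩
  intro h
  rcases cycleGraph_adj.mp h.1 with hxy | hyx
  · rw [sub_eq_iff_eq_add'.mp hxy] at h
    exact cycleGraph_not_areTrueTwins_add_one y h.symm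
  · rw [sub_eq_iff_eq_add'.mp hyx] at h
    exact cycleGraph_not_areTrueTwins_add_one x h

end SimpleGraph

theorem graphL_adj {p q : Fin 5 × Fin 2} :
    graphL.Adj p q ↔ p ≠ q ∧ (p.1 = q.1 ∨ (pathGraph 5).Adj p.1 q.1) := by
  simp only [graphL, fromRel_adj, pathGraph_adj, Fin.ext_iff]
  tauto

theorem graphL_areTrueTwins {p q : Fin 5 × Fin 2} (hpq : p ≠ q) (h : p.1 = q.1) :
    graphL.AreTrueTwins p q := by
  refine ⟨graphL_adj.mpr ⟨hpq, .inl h⟩, fun w hwp hwq => ?_⟩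
  simp only [graphL_adj, h, ne_eq, hwp.symm, hwq.symm]

theorem indFree_graphL {W : Type*} [Fintype W] {H : SimpleGraph W}
    (hH : ∀ x y, ¬ H.AreTrueTwins x y) (hcard : 5 < Fintype.card W) : IndFree H graphL := by
  refine ⟨fun e => ?_⟩
  have hinj : Function.Injective (Prod.fst ∘ e) := fun x y hxy => by
    by_contra hne
    exact hH x y ((graphL_areTrueTwins (e.injective.ne hne) hxy).comap e)
  simpa using (Fintype.card_le_of_injective _ hinj).trans_lt hcard

def graphL.sectionEmbedding (s : Fin 5 → Fin 2) : pathGraph 5 ↪g graphL where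
  toFun i := (i, s i)
  inj' i j h := congrArg Prod.fst h
  map_rel_iff' {i j} := by
    refine graphL_adj.trans ⟨fun ⟨hne, h⟩ => h.resolve_left ?_, fun h => ⟨?_, .inr h⟩⟩
    · rintro (rfl : i = j)
      exact hne rfl
    · exact fun hij => h.ne (congrArg Prod.fst hij)

theorem not_partProbeFree_of_embedding {V W : Type*} {H : SimpleGraph W} {G : SimpleGraph V}
    {N : Set V} (e : H ↪g G) (he : ∀ x, e x ∉ N) : ¬ PartProbeFree H G N := by
  rintro ⟨-, G', hle, hfill, hfree⟩
  refine hfree.false ⟨e.toEmbedding, fun {x y} => ⟨fun h => ?_, fun h => hle (e.map_adj_iff.mpr h)⟩⟩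
  by_contra hxy
  exact he x (hfill _ _ h (mt e.map_adj_iff.mp hxy)).1

theorem exists_notMem_column {N : Set (Fin 5 × Fin 2)}
    (hN : ∀ u ∈ N, ∀ v ∈ N, ¬ graphL.Adj u v) (i : Fin 5) : ∃ a, (i, a) ∉ N := by
  by_contra! h
  exact hN _ (h 0) _ (h 1) (graphL_adj.mpr ⟨by simp, .inl rfl⟩)

theorem stmt_10 :
    (∀ ℓ : ℕ, 3 ≤ ℓ → IndFree (cycleGraph (2 * ℓ + 1)) graphL) ∧
    ¬ ProbeFree (pathGraph 5) graphL := by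
  refine ⟨fun ℓ hℓ => indFree_graphL (cycleGraph_not_areTrueTwins (by omega)) (by simp; omega), ?_⟩
  rintro ⟨N, hN⟩
  choose s hs using exists_notMem_column hN.1
  exact not_partProbeFree_of_embedding (graphL.sectionEmbedding s) hs hN
end

section
/- Every probe P5-free graph is (C7,C9,C11,...)-free; that is, for every integer ℓ ≥ 3, no probe P5-free graph contains an induced cycle of length 2ℓ+1. -/
open SimpleGraph

/-!
Since non-probes are independent, the probe/non-probe partition cannot properly 2-colour an induced
odd cycle, so such a cycle of length at least 7 contains an induced path `v₀ ⋯ v₅` of `G` whose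
first two vertices are probes. New edges of the completion `G'` join non-probes only, so among
`v₀, …, v₄` the only pair that can become adjacent is `v₂ v₄`. If it does not, `v₀ ⋯ v₄` is an
induced `P₅` of `G'`; if it does, `v₄` is a non-probe, so `v₅` is a probe and `v₅ v₄ v₂ v₁ v₀` is
an induced `P₅` of `G'`.
-/

namespace SimpleGraph

theorem cycleGraph_adj_iff_eq_add_one {n : ℕ} [NeZero n] (hn : 2 ≤ n) {u v : Fin n} :
    (cycleGraph n).Adj u v ↔ u = v + 1 ∨ v = u + 1 := by
  obtain ⟨m, rfl⟩ : ∃ m, n = m + 2 := ⟨n - 2, by omega⟩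
  rw [cycleGraph_adj, sub_eq_iff_eq_add', sub_eq_iff_eq_add']

theorem cycleGraph_adj_add_left_iff {n : ℕ} [NeZero n] {u a b : Fin n} :
    (cycleGraph n).Adj (u + a) (u + b) ↔ (cycleGraph n).Adj a b := by
  simp only [cycleGraph_adj', add_sub_add_left_eq_sub]

theorem cycleGraph_adj_castLE_iff {m n : ℕ} (h : m < n) {a b : Fin m} :
    (cycleGraph n).Adj (Fin.castLE h.le a) (Fin.castLE h.le b) ↔ (pathGraph m).Adj a b := by
  have val_sub (x y : Fin n) :
      ((x - y : Fin n) : ℕ) = if y ≤ x then (x : ℕ) - y else n + x - y := by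
    split_ifs with hxy
    · exact Fin.coe_sub_iff_le.mpr hxy
    · exact Fin.coe_sub_iff_lt.mpr (not_le.mp hxy)
  rw [cycleGraph_adj', pathGraph_adj, val_sub, val_sub]
  simp only [Fin.le_def, Fin.val_castLE]
  split_ifs <;> omega

@[simps]
def pathGraphEmbeddingCycleGraph {m n : ℕ} [NeZero n] (h : m < n) (u : Fin n) :
    pathGraph m ↪g cycleGraph n where
  toFun k := u + Fin.castLE h.le k
  inj' := (add_right_injective u).comp (Fin.castLE_injective h.le)
  map_rel_iff' := cycleGraph_adj_add_left_iff.trans (cycleGraph_adj_castLE_iff h)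

theorem exists_notMem_and_add_one_notMem_of_odd {n : ℕ} [NeZero n] {S : Set (Fin n)}
    (hS : (cycleGraph n).IsIndepSet S) (hn : Odd n) (h2 : 2 ≤ n) : ∃ u, u ∉ S ∧ u + 1 ∉ S := by
  by_contra! h
  let C : (cycleGraph n).Coloring Prop := Coloring.mk (· ∈ S) fun {u v} huv hiff => by
    rw [eq_iff_iff] at hiff
    by_cases hu : u ∈ S
    · exact hS hu (hiff.mp hu) huv.ne huv
    · rcases (cycleGraph_adj_iff_eq_add_one h2).mp huv with rfl | rfl
      · exact hu (h v (mt hiff.mpr hu))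
      · exact hu (hiff.mpr (h u hu))
  have := C.colorable.chromaticNumber_le
  rw [chromaticNumber_cycleGraph_of_odd n h2 hn, Fintype.card_prop] at this
  exact absurd this (by decide)

variable {V : Type*}

theorem nonempty_pathGraph_five_embedding {G : SimpleGraph V} {a b c d e : V}
    (hab : G.Adj a b) (hbc : G.Adj b c) (hcd : G.Adj c d) (hde : G.Adj d e)
    (hac : ¬G.Adj a c) (had : ¬G.Adj a d) (hae : ¬G.Adj a e)
    (hbd : ¬G.Adj b d) (hbe : ¬G.Adj b e) (hce : ¬G.Adj c e)
    (hac' : a ≠ c) (had' : a ≠ d) (hae' : a ≠ e) (hbd' : b ≠ d) (hbe' : b ≠ e) (hce' : c ≠ e) :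
    Nonempty (pathGraph 5 ↪g G) := by
  refine ⟨⟨⟨![a, b, c, d, e], fun i j h => ?_⟩, fun {i j} => ?_⟩⟩
  · fin_cases i <;> fin_cases j <;>
      simp_all [hab.ne, hbc.ne, hcd.ne, hde.ne, hab.ne.symm, hbc.ne.symm, hcd.ne.symm, hde.ne.symm]
  · change G.Adj (![a, b, c, d, e] i) (![a, b, c, d, e] j) ↔ _
    fin_cases i <;> fin_cases j <;> simp [pathGraph_adj, G.adj_comm, *]

theorem nonempty_pathGraph_five_embedding_of_probes {G G' : SimpleGraph V} {N : Set V}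
    (hN : ∀ u ∈ N, ∀ v ∈ N, ¬G.Adj u v) (hle : G ≤ G')
    (hchord : ∀ u v, G'.Adj u v → ¬G.Adj u v → u ∈ N ∧ v ∈ N)
    (f : pathGraph 6 ↪g G) (h₀ : f 0 ∉ N) (h₁ : f 1 ∉ N) : Nonempty (pathGraph 5 ↪g G') := by
  have edge (i j : Fin 6) (h : i.val + 1 = j.val := by rfl) : G'.Adj (f i) (f j) :=
    hle (f.map_adj_iff.mpr (pathGraph_adj.mpr (.inl h)))
  have nonedge (i j : Fin 6) (hprobe : f i ∉ N ∨ f j ∉ N)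
      (hij : ¬(pathGraph 6).Adj i j := by simp [pathGraph_adj]) : ¬G'.Adj (f i) (f j) :=
    fun hadj => by have := hchord _ _ hadj (f.map_adj_iff.not.mpr hij); tauto
  have distinct (i j : Fin 6) (hij : i ≠ j := by decide) : f i ≠ f j := f.injective.ne hij
  by_cases h₂₄ : G'.Adj (f 2) (f 4)
  · have h₄ : f 4 ∈ N := (hchord _ _ h₂₄ (f.map_adj_iff.not.mpr (by simp [pathGraph_adj]))).2
    have h₅ : f 5 ∉ N := fun h₅ => hN _ h₄ _ h₅ (f.map_adj_iff.mpr (by simp [pathGraph_adj]))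
    exact nonempty_pathGraph_five_embedding (edge 4 5).symm h₂₄.symm (edge 1 2).symm (edge 0 1).symm
      (nonedge 5 2 (.inl h₅)) (nonedge 5 1 (.inl h₅)) (nonedge 5 0 (.inl h₅))
      (nonedge 4 1 (.inr h₁)) (nonedge 4 0 (.inr h₀)) (nonedge 2 0 (.inr h₀))
      (distinct 5 2) (distinct 5 1) (distinct 5 0) (distinct 4 1) (distinct 4 0) (distinct 2 0)
  · exact nonempty_pathGraph_five_embedding (edge 0 1) (edge 1 2) (edge 2 3) (edge 3 4)
      (nonedge 0 2 (.inl h₀)) (nonedge 0 3 (.inl h₀)) (nonedge 0 4 (.inl h₀))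
      (nonedge 1 3 (.inl h₁)) (nonedge 1 4 (.inl h₁)) h₂₄
      (distinct 0 2) (distinct 0 3) (distinct 0 4) (distinct 1 3) (distinct 1 4) (distinct 2 4)

end SimpleGraph

theorem stmt_11_general {V : Type*} (G : SimpleGraph V)
    (hprobe : ProbeFree (pathGraph 5) G) :
    ∀ ℓ : ℕ, 3 ≤ ℓ → IndFree (cycleGraph (2 * ℓ + 1)) G := by
  obtain ⟨N, hN, G', hle, hchord, hfree⟩ := hprobe
  intro ℓ hℓ
  refine ⟨fun e => ?_⟩
  have hindep : (cycleGraph (2 * ℓ + 1)).IsIndepSet (e ⁻¹' N) :=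
    fun u hu v hv _ huv => hN _ hu _ hv (e.map_adj_iff.mpr huv)
  obtain ⟨u, hu, hu₁⟩ :=
    exists_notMem_and_add_one_notMem_of_odd hindep (odd_two_mul_add_one ℓ) (by omega)
  have hcast : Fin.castLE (by omega : 6 ≤ 2 * ℓ + 1) 1 = 1 :=
    Fin.ext (by simp [Nat.mod_eq_of_lt (by omega : 1 < 2 * ℓ + 1)])
  let f := (pathGraphEmbeddingCycleGraph (by omega : 6 < 2 * ℓ + 1) u).trans e
  obtain ⟨p⟩ := nonempty_pathGraph_five_embedding_of_probes hN hle hchord f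
    (by simpa [f] using hu) (by simpa [f, hcast] using hu₁)
  exact hfree.false p

theorem stmt_11 {V : Type*} [Fintype V] (G : SimpleGraph V)
    (hprobe : ProbeFree (pathGraph 5) G) :
    ∀ ℓ : ℕ, 3 ≤ ℓ → IndFree (cycleGraph (2 * ℓ + 1)) G :=
  stmt_11_general G hprobe
end

section
/- For every integer ℓ ≥ 3, the cycle C_{2ℓ+1} is not probe P5-free, but every proper induced subgraph of C_{2ℓ+1} is probe P5-free. (In other words, C_{2ℓ+1} belongs to the minimal set F_{P5} of forbidden induced subgraphs characterising probe P5-free graphs.) -/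
open SimpleGraph

/-!
An independent set of non-probes cannot alternate all the way round an odd cycle, so some two
consecutive vertices `v₀, v₁` are probes. Fill edges avoid probes, so on the induced path
`v₀ ⋯ v₅` either `v₂v₄` is not filled and `v₀ ⋯ v₄` is an induced `P₅`, or `v₂, v₄` are non-probes,
hence `v₅` is a probe and `v₀ v₁ v₂ v₄ v₅` is an induced `P₅`.

Deleting a vertex leaves a bipartite graph. Taking one side as the non-probes and completing it to
a clique gives a split graph, which has no induced `P₅`: each end edge of a `P₅` meets the clique,
which would join the two ends.
-/

namespace SimpleGraph

instance (n : ℕ) : DecidableRel (pathGraph n).Adj := fun _ _ => decidable_of_iff' _ pathGraph_adj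

variable {V : Type*} {G : SimpleGraph V}

theorem not_indFree_pathGraph_five {a b c d e : V}
    (hab : G.Adj a b) (hbc : G.Adj b c) (hcd : G.Adj c d) (hde : G.Adj d e)
    (hac : ¬ G.Adj a c) (had : ¬ G.Adj a d) (hae : ¬ G.Adj a e)
    (hbd : ¬ G.Adj b d) (hbe : ¬ G.Adj b e) (hce : ¬ G.Adj c e) :
    ¬ IndFree (pathGraph 5) G := by
  have hadj : ∀ i j, G.Adj (![a, b, c, d, e] i) (![a, b, c, d, e] j) ↔ (pathGraph 5).Adj i j := by
    intro i j
    fin_cases i <;> fin_cases j <;> simp [pathGraph_adj, G.adj_comm, *]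
  -- `P₅` has no twins, so an induced copy is automatically injective.
  have hinj : Function.Injective ![a, b, c, d, e] := by
    have twinFree : ∀ i j : Fin 5, ¬ (pathGraph 5).Adj i j →
        (∀ k, (pathGraph 5).Adj i k ↔ (pathGraph 5).Adj j k) → i = j := by decide
    intro i j hij
    refine twinFree i j ?_ fun k => ?_
    · rw [← hadj, hij]; exact G.irrefl
    · rw [← hadj, ← hadj, hij]
  exact fun h => h.false ⟨⟨_, hinj⟩, hadj _ _⟩

theorem indFree_pathGraph_five_of_isClique {N : Set V} (hN : G.IsClique N)
    (hcover : ∀ ⦃u v⦄, G.Adj u v → u ∈ N ∨ v ∈ N) : IndFree (pathGraph 5) G := by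
  refine ⟨fun e => ?_⟩
  have hadj : ∀ {i j}, (pathGraph 5).Adj i j → G.Adj (e i) (e j) := e.map_adj_iff.mpr
  have hnonadj : ∀ {i j}, e i ∈ N → e j ∈ N → ¬ (pathGraph 5).Adj i j → i ≠ j → False :=
    fun hi hj h hne => h (e.map_adj_iff.mp (hN hi hj (e.injective.ne hne)))
  rcases hcover (hadj (i := 0) (j := 1) (by decide)) with h0 | h1 <;>
    rcases hcover (hadj (i := 3) (j := 4) (by decide)) with h3 | h4
  · exact hnonadj h0 h3 (by decide) (by decide)
  · exact hnonadj h0 h4 (by decide) (by decide)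
  · exact hnonadj h1 h3 (by decide) (by decide)
  · exact hnonadj h1 h4 (by decide) (by decide)

theorem IsBipartite.probeFree_pathGraph_five (hG : G.IsBipartite) :
    ProbeFree (pathGraph 5) G := by
  obtain ⟨s, t, hst⟩ := hG.exists_isBipartiteWith
  have hcover : ∀ ⦃u v⦄, G.Adj u v → u ∈ s ∨ v ∈ s :=
    fun _ _ h => (hst.mem_of_adj h).imp And.left And.right
  let G' := G ⊔ fromRel fun u v => u ∈ s ∧ v ∈ s
  refine ⟨s, fun u hu v hv h => Set.disjoint_left.mp hst.disjoint hv (hst.mem_of_mem_adj hu h),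
    G', le_sup_left, fun u v h hG => ?_, indFree_pathGraph_five_of_isClique (N := s) ?_ ?_⟩
  · rcases h with h | ⟨-, h | h⟩
    exacts [absurd h hG, h, h.symm]
  · exact fun u hu v hv huv => Or.inr ⟨huv, Or.inl ⟨hu, hv⟩⟩
  · rintro u v (h | ⟨-, h | h⟩)
    exacts [hcover h, .inl h.1, .inr h.1]

theorem not_partProbeFree_pathGraph_five {N : Set V} (f : pathGraph 6 ↪g G)
    (h0 : f 0 ∉ N) (h1 : f 1 ∉ N) : ¬ PartProbeFree (pathGraph 5) G N := by
  rintro ⟨hind, G', hle, hfill, hfree⟩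
  have hadj : ∀ {i j}, (pathGraph 6).Adj i j → G'.Adj (f i) (f j) :=
    fun h => hle (f.map_adj_iff.mpr h)
  have hnonadj : ∀ {i j}, ¬ (pathGraph 6).Adj i j → f i ∉ N ∨ f j ∉ N → ¬ G'.Adj (f i) (f j) := by
    intro i j h hij h'
    obtain ⟨hi, hj⟩ := hfill _ _ h' (f.map_adj_iff.not.mpr h)
    exact hij.elim (· hi) (· hj)
  by_cases h24 : G'.Adj (f 2) (f 4)
  · have h4 : f 4 ∈ N := (hfill _ _ h24 (f.map_adj_iff.not.mpr (by decide))).2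
    have h5 : f 5 ∉ N := fun h5 => hind _ h4 _ h5 (f.map_adj_iff.mpr (by decide))
    exact not_indFree_pathGraph_five (hadj (by decide)) (hadj (by decide)) h24 (hadj (by decide))
      (hnonadj (by decide) (.inl h0)) (hnonadj (by decide) (.inl h0))
      (hnonadj (by decide) (.inl h0)) (hnonadj (by decide) (.inl h1))
      (hnonadj (by decide) (.inl h1)) (hnonadj (by decide) (.inr h5)) hfree
  · exact not_indFree_pathGraph_five (d := f 3)
      (hadj (by decide)) (hadj (by decide)) (hadj (by decide)) (hadj (by decide))
      (hnonadj (by decide) (.inl h0)) (hnonadj (by decide) (.inl h0))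
      (hnonadj (by decide) (.inl h0)) (hnonadj (by decide) (.inl h1))
      (hnonadj (by decide) (.inl h1)) h24 hfree

section cycleGraph

variable {n : ℕ}

theorem cycleGraph_adj_iff_pathGraph_adj_or (hn : 1 < n) {u v : Fin n} :
    (cycleGraph n).Adj u v ↔ (pathGraph n).Adj u v ∨
      u.val = 0 ∧ v.val + 1 = n ∨ v.val = 0 ∧ u.val + 1 = n := by
  rw [cycleGraph_adj', pathGraph_adj]
  rcases lt_trichotomy u v with h | rfl | h
  · rw [Fin.coe_sub_iff_lt.mpr h, Fin.coe_sub_iff_le.mpr h.le]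
    omega
  · rw [Fin.coe_sub_iff_le.mpr le_rfl]
    omega
  · rw [Fin.coe_sub_iff_lt.mpr h, Fin.coe_sub_iff_le.mpr h.le]
    omega

def cycleGraph.rotation [NeZero n] (k : Fin n) : cycleGraph n ≃g cycleGraph n where
  toEquiv := Equiv.addLeft k
  map_rel_iff' := by simp [cycleGraph_adj']

def cycleGraph.pathGraphEmbedding [NeZero n] {m : ℕ} (hm : m < n) (k : Fin n) :
    pathGraph m ↪g cycleGraph n :=
  (cycleGraph.rotation k).toEmbedding.comp
    { toEmbedding := Fin.castLEEmb hm.le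
      map_rel_iff' := by
        intro i j
        have := j.isLt
        simp only [Fin.castLEEmb_apply, cycleGraph_adj_iff_pathGraph_adj_or (show 1 < n by omega),
          pathGraph_adj, Fin.val_castLE, or_iff_left_iff_imp]
        omega }

@[simp]
theorem cycleGraph.pathGraphEmbedding_apply [NeZero n] {m : ℕ} (hm : m < n) (k : Fin n)
    (i : Fin m) : cycleGraph.pathGraphEmbedding hm k i = k + Fin.castLE hm.le i :=
  rfl

theorem cycleGraph.exists_notMem_and_add_one_notMem [NeZero n] (hn : 1 < n) (hodd : Odd n)
    {N : Set (Fin n)} (hN : ∀ u ∈ N, ∀ v ∈ N, ¬ (cycleGraph n).Adj u v) :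
    ∃ k, k ∉ N ∧ k + 1 ∉ N := by
  by_contra! h
  have hbip : (cycleGraph n).IsBipartiteWith N Nᶜ := by
    refine ⟨disjoint_compl_right, fun u v huv => ?_⟩
    by_cases hu : u ∈ N
    · exact .inl ⟨hu, fun hv => hN u hu v hv huv⟩
    · refine .inr ⟨hu, ?_⟩
      obtain ⟨n', rfl⟩ := Nat.exists_eq_add_of_le' hn
      rcases cycleGraph_adj.mp huv with huv | huv
      · rw [eq_add_of_sub_eq' huv] at hu
        exact by_contra fun hv => hu (h v hv)
      · exact eq_add_of_sub_eq' huv ▸ h u hu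
  have h2 := chromaticNumber_le_two_iff_isBipartite.mpr hbip.isBipartite
  rw [chromaticNumber_cycleGraph_of_odd n hn hodd] at h2
  exact absurd h2 (by decide)

theorem cycleGraph.induce_isBipartite_of_notMem [NeZero n] {S : Set (Fin n)} {m : Fin n}
    (hm : m ∉ S) :
    ((cycleGraph n).induce S).IsBipartite := by
  have hne : ∀ v : S, (-m + v).val ≠ 0 := fun v h =>
    hm (neg_add_eq_zero.mp (Fin.val_eq_zero_iff.mp h) ▸ v.2)
  let φ : (cycleGraph n).induce S →g pathGraph n :=
    { toFun := fun v => -m + v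
      map_rel' := fun {u v} huv => by
        have hn : 1 < n := by have := cycleGraph_adj'.mp huv; omega
        rcases (cycleGraph_adj_iff_pathGraph_adj_or hn).mp
          ((cycleGraph.rotation (-m)).map_adj_iff.mpr huv) with h | ⟨h, -⟩ | ⟨h, -⟩
        exacts [h, (hne u h).elim, (hne v h).elim] }
  exact Colorable.of_hom φ (pathGraph.bicoloring n).colorable

end cycleGraph

end SimpleGraph

theorem stmt_12 (ℓ : ℕ) (hℓ : 3 ≤ ℓ) :
    ¬ ProbeFree (pathGraph 5) (cycleGraph (2 * ℓ + 1)) ∧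
    ∀ S : Set (Fin (2 * ℓ + 1)), S ≠ Set.univ →
      ProbeFree (pathGraph 5) ((cycleGraph (2 * ℓ + 1)).induce S) := by
  refine ⟨fun ⟨N, hN⟩ => ?_, fun S hS => ?_⟩
  · obtain ⟨k, hk, hk1⟩ :=
      cycleGraph.exists_notMem_and_add_one_notMem (by omega) (odd_two_mul_add_one ℓ) hN.1
    let f := cycleGraph.pathGraphEmbedding (m := 6) (by omega) k
    have hf0 : f 0 = k := by simp [f]
    have hf1 : f 1 = k + 1 := by
      simp only [f, cycleGraph.pathGraphEmbedding_apply, add_right_inj, Fin.ext_iff, Fin.val_castLE]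
      exact (Nat.mod_eq_of_lt (by omega)).symm
    exact not_partProbeFree_pathGraph_five f (hf0 ▸ hk) (hf1 ▸ hk1) hN
  · obtain ⟨m, hm⟩ := (Set.ne_univ_iff_exists_notMem S).mp hS
    exact (cycleGraph.induce_isBipartite_of_notMem hm).probeFree_pathGraph_five
end

section
/- For every integer ℓ ≥ 3, the cycle C_{2ℓ+1} is not probe 2P2-free, but every proper induced subgraph of C_{2ℓ+1} is probe 2P2-free. (In other words, C_{2ℓ+1} belongs to the minimal set F_{2P2} of forbidden induced subgraphs characterising probe 2P2-free graphs.) -/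
open SimpleGraph

/-- The graph `2P₂`: the disjoint union of two one-edge paths. -/
def twoP2 : SimpleGraph (Fin 4) :=
  SimpleGraph.fromRel (fun i j => (i = 0 ∧ j = 1) ∨ (i = 2 ∧ j = 3))

/-!
An independent set of non-probes in an odd cycle leaves two adjacent probes `a`, `b`, and once
the cycle has at least six vertices some edge `cd` has no neighbour in `{a, b}`. Edges may only
be added between non-probes, so `{a, b, c, d}` still induces `2P₂` in every completion.
Conversely, deleting a vertex of the cycle leaves a bipartite graph, and a bipartite graph is
probe `2P₂`-free: take one side as the non-probes and complete it to a clique. Every edge then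
meets that clique, so any two disjoint edges are joined by an edge.
-/

theorem twoP2_adj_iff {i j : Fin 4} :
    twoP2.Adj i j ↔ (i = 0 ∧ j = 1) ∨ (i = 1 ∧ j = 0) ∨ (i = 2 ∧ j = 3) ∨ (i = 3 ∧ j = 2) := by
  revert i j
  simp only [twoP2, fromRel_adj]
  decide

theorem not_indFree_twoP2 {V : Type*} {G : SimpleGraph V} {a b c d : V}
    (hab : G.Adj a b) (hcd : G.Adj c d) (hac : ¬ G.Adj a c) (had : ¬ G.Adj a d)
    (hbc : ¬ G.Adj b c) (hbd : ¬ G.Adj b d) : ¬ IndFree twoP2 G := by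
  have hne : a ≠ c ∧ a ≠ d ∧ b ≠ c ∧ b ≠ d := by
    refine ⟨?_, ?_, ?_, ?_⟩ <;> rintro rfl
    exacts [hbc hab.symm, hbd hab.symm, hac hab, had hab]
  refine not_isEmpty_iff.2 ⟨⟨⟨![a, b, c, d], ?_⟩, ?_⟩⟩
  · intro i j hij
    fin_cases i <;> fin_cases j <;> simp_all [hab.ne, hcd.ne, eq_comm]
  · intro i j
    show G.Adj (![a, b, c, d] i) (![a, b, c, d] j) ↔ twoP2.Adj i j
    fin_cases i <;> fin_cases j <;>
      simp [twoP2_adj_iff, hab, hcd, hab.symm, hcd.symm, hac, had, hbc, hbd, mt Adj.symm hac,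
        mt Adj.symm had, mt Adj.symm hbc, mt Adj.symm hbd]

theorem indFree_twoP2_of_isClique {V : Type*} {G : SimpleGraph V} {N : Set V}
    (hN : G.IsClique N) (hcover : ∀ u v, G.Adj u v → u ∈ N ∨ v ∈ N) : IndFree twoP2 G := by
  refine ⟨fun φ ↦ ?_⟩
  have h01 := hcover _ _ (φ.map_rel_iff.2 (twoP2_adj_iff.2 (by decide)) : G.Adj (φ 0) (φ 1))
  have h23 := hcover _ _ (φ.map_rel_iff.2 (twoP2_adj_iff.2 (by decide)) : G.Adj (φ 2) (φ 3))
  have key : ∀ i j, φ i ∈ N → φ j ∈ N → i ≠ j → twoP2.Adj i j :=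
    fun i j hi hj hij ↦ φ.map_rel_iff.1 (hN hi hj (φ.injective.ne hij))
  rcases h01 with h0 | h0 <;> rcases h23 with h2 | h2 <;>
    exact absurd (key _ _ h0 h2 (by decide)) (by rw [twoP2_adj_iff]; decide)

theorem partProbeFree_twoP2_of_isBipartiteWith {V : Type*} {G : SimpleGraph V} {s t : Set V}
    (h : G.IsBipartiteWith s t) : PartProbeFree twoP2 G s := by
  have hindep : ∀ u ∈ s, ∀ v ∈ s, ¬ G.Adj u v := fun u hu v hv huv ↦ by
    rcases h.mem_of_adj huv with ⟨-, hv'⟩ | ⟨hu', -⟩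
    exacts [h.disjoint.notMem_of_mem_left hv hv', h.disjoint.notMem_of_mem_left hu hu']
  refine ⟨hindep, G ⊔ fromRel (fun u v ↦ u ∈ s ∧ v ∈ s), le_sup_left, ?_, ?_⟩
  · rintro u v (huv | huv) hG
    exacts [absurd huv hG, ((fromRel_adj _ _ _).1 huv).2.elim id And.symm]
  · refine indFree_twoP2_of_isClique (N := s) (fun u hu v hv huv ↦ Or.inr ?_) ?_
    · exact (fromRel_adj _ _ _).2 ⟨huv, Or.inl ⟨hu, hv⟩⟩
    · rintro u v (huv | huv)
      · exact (h.mem_of_adj huv).imp And.left And.right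
      · exact Or.inl ((fromRel_adj _ _ _).1 huv |>.2.elim And.left And.right)

theorem probeFree_twoP2_of_isBipartite {V : Type*} {G : SimpleGraph V} (h : G.IsBipartite) :
    ProbeFree twoP2 G :=
  let ⟨s, _, hst⟩ := h.exists_isBipartiteWith
  ⟨s, partProbeFree_twoP2_of_isBipartiteWith hst⟩

theorem exists_adj_notMem_of_not_isBipartite {V : Type*} {G : SimpleGraph V} {N : Set V}
    (hG : ¬ G.IsBipartite) (hN : ∀ u ∈ N, ∀ v ∈ N, ¬ G.Adj u v) :
    ∃ a b, G.Adj a b ∧ a ∉ N ∧ b ∉ N := by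
  by_contra! h
  refine hG (IsBipartiteWith.isBipartite (s := N) (t := Nᶜ) ⟨disjoint_compl_right, ?_⟩)
  intro u v huv
  by_cases hu : u ∈ N
  · exact Or.inl ⟨hu, fun hv ↦ hN u hu v hv huv⟩
  · exact Or.inr ⟨hu, h u v huv hu⟩

theorem not_probeFree_twoP2 {V : Type*} {G : SimpleGraph V} (hG : ¬ G.IsBipartite)
    (hfar : ∀ a b, G.Adj a b → ∃ c d, G.Adj c d ∧
      ¬ G.Adj a c ∧ ¬ G.Adj a d ∧ ¬ G.Adj b c ∧ ¬ G.Adj b d) :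
    ¬ ProbeFree twoP2 G := by
  rintro ⟨N, hN, G', hle, hnew, hfree⟩
  obtain ⟨a, b, hab, ha, hb⟩ := exists_adj_notMem_of_not_isBipartite hG hN
  obtain ⟨c, d, hcd, hac, had, hbc, hbd⟩ := hfar a b hab
  have hprobe : ∀ u v, u ∉ N → ¬ G.Adj u v → ¬ G'.Adj u v :=
    fun u v hu huv h' ↦ hu (hnew u v h' huv).1
  exact not_indFree_twoP2 (hle hab) (hle hcd) (hprobe _ _ ha hac) (hprobe _ _ ha had)
    (hprobe _ _ hb hbc) (hprobe _ _ hb hbd) hfree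

theorem cycleGraph_adj_iff_int {n : ℕ} {u v : Fin n} :
    (cycleGraph n).Adj u v ↔ ((u - v : Fin n) : ℤ) = 1 ∨ ((v - u : Fin n) : ℤ) = 1 := by
  rw [cycleGraph_adj']; omega

theorem isBipartite_induce_cycleGraph {n : ℕ} {v : Fin n} {S : Set (Fin n)} (hv : v ∉ S) :
    ((cycleGraph n).induce S).IsBipartite := by
  -- The parity of `u - v` flips along every edge of the cycle except the one entering `v`.
  refine (Coloring.mk (fun u : S ↦ decide (((u.1 - v : Fin n) : ℤ) % 2 = 0)) ?_).colorable
  rintro ⟨a, ha⟩ ⟨b, hb⟩ hab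
  have hav : a ≠ v := by rintro rfl; exact hv ha
  have hbv : b ≠ v := by rintro rfl; exact hv hb
  rw [comap_adj, Function.Embedding.subtype_apply, Function.Embedding.subtype_apply,
    cycleGraph_adj_iff_int] at hab
  rw [Ne, Fin.ext_iff] at hav hbv
  simp only [ne_eq, decide_eq_decide]
  fin_omega

theorem not_isBipartite_cycleGraph {n : ℕ} (h : 2 ≤ n) (hn : Odd n) :
    ¬ (cycleGraph n).IsBipartite := by
  rw [← chromaticNumber_le_two_iff_isBipartite, chromaticNumber_cycleGraph_of_odd n h hn]
  decide

theorem cycleGraph_exists_adj_anticomplete {n : ℕ} (hn : 6 ≤ n) {a b : Fin n}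
    (hab : (cycleGraph n).Adj a b) :
    ∃ c d, (cycleGraph n).Adj c d ∧ ¬ (cycleGraph n).Adj a c ∧ ¬ (cycleGraph n).Adj a d ∧
      ¬ (cycleGraph n).Adj b c ∧ ¬ (cycleGraph n).Adj b d := by
  simp only [cycleGraph_adj_iff_int] at hab ⊢
  rcases hab with h | h
  · exact ⟨b + ⟨3, by omega⟩, b + ⟨4, by omega⟩, by fin_omega⟩
  · exact ⟨a + ⟨3, by omega⟩, a + ⟨4, by omega⟩, by fin_omega⟩

theorem stmt_13 (ℓ : ℕ) (hℓ : 3 ≤ ℓ) :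
    ¬ ProbeFree twoP2 (cycleGraph (2 * ℓ + 1)) ∧
    ∀ S : Set (Fin (2 * ℓ + 1)), S ≠ Set.univ →
      ProbeFree twoP2 ((cycleGraph (2 * ℓ + 1)).induce S) := by
  refine ⟨not_probeFree_twoP2 ?_ fun _ _ ↦ cycleGraph_exists_adj_anticomplete (by omega), ?_⟩
  · exact not_isBipartite_cycleGraph (by omega) (odd_two_mul_add_one ℓ)
  · intro S hS
    obtain ⟨v, hv⟩ := Set.ne_univ_iff_exists_notMem S |>.1 hS
    exact probeFree_twoP2_of_isBipartite (isBipartite_induce_cycleGraph hv)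
end

section
/- Let X be a finite set with |X| = 3k for a positive integer k, and let 𝒮 be a collection of 3-element subsets of X with s = |𝒮| ≥ k. Let G be the graph whose vertex set is the disjoint union of X, Y = {y_S : S ∈ 𝒮}, and a set Z with |Z| = s−k, where: X induces a clique; Y and Z are independent sets; X is anticomplete to Z; Y is complete to Z; and for x ∈ X and S ∈ 𝒮, the vertices x and y_S are adjacent if and only if x ∈ S. Then there exists a subcollection 𝒮' ⊆ 𝒮 such that each element of X occurs in exactly one subset in 𝒮' if and only if the vertex set of G is the union of s pairwise disjoint cliques. -/
/-!
A partition of `V(G)` into `s` cliques is a proper `s`-colouring of `Gᶜ`. Since `Y` is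
independent, each of the `s` cliques contains exactly one `y_S`; call it the clique of `S`.
The `s - k` vertices of `Z` lie in distinct cliques, none of which meets `X`, so the `3k`
vertices of `X` lie in at most `k` cliques, the clique of `S` holding only points of `S`.
Counting forces each of these cliques to contain all of `S`, and these `S` form an exact cover.
Conversely, an exact cover has `k` members: put each of them together with its `y_S`, and
pair off the remaining `s - k` vertices `y_S` with the vertices of `Z`.
-/

open Finset SimpleGraph

theorem Finset.apply_eq_of_mem_of_card_le {β ι : Type*} [DecidableEq ι] {A : Finset β}
    {g : β → ι} {T : ι → Finset β} {c m : ℕ} (hA : #A = c * m) (himage : #(A.image g) ≤ m)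
    (hT : ∀ i, #(T i) ≤ c) (hmem : ∀ a ∈ A, a ∈ T (g a)) {a b : β} (hb : b ∈ A)
    (hab : a ∈ T (g b)) : g a = g b := by
  have hfiber_le : ∀ i ∈ A.image g, #{x ∈ A | g x = i} ≤ c := fun i _ =>
    (card_le_card fun x hx => (mem_filter.1 hx).2 ▸ hmem x (mem_filter.1 hx).1).trans (hT i)
  have hsum : ∑ i ∈ A.image g, #{x ∈ A | g x = i} = ∑ _i ∈ A.image g, c := by
    refine le_antisymm (sum_le_sum hfiber_le) ?_
    rw [sum_const, smul_eq_mul, mul_comm, ← card_eq_sum_card_image, hA]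
    exact Nat.mul_le_mul_left c himage
  have hfiber : {x ∈ A | g x = g b} = T (g b) :=
    eq_of_subset_of_card_le (fun x hx => (mem_filter.1 hx).2 ▸ hmem x (mem_filter.1 hx).1)
      (((sum_eq_sum_iff_of_le hfiber_le).1 hsum _ (mem_image_of_mem g hb)).symm ▸ hT _)
  rw [← hfiber] at hab
  exact (mem_filter.1 hab).2

theorem Finset.card_eq_mul_card_of_forall_existsUnique {α : Type*} {X : Finset α}
    {𝒞 : Finset (Finset α)} {c : ℕ} (hsub : ∀ S ∈ 𝒞, S ⊆ X) (hcard : ∀ S ∈ 𝒞, #S = c)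
    (hcov : ∀ x ∈ X, ∃! S, S ∈ 𝒞 ∧ x ∈ S) : #X = c * #𝒞 := by
  classical
  have hX : X = 𝒞.biUnion id := by
    ext x
    simp only [mem_biUnion, id]
    exact ⟨fun hx => (hcov x hx).exists, fun ⟨S, hS, hxS⟩ => hsub S hS hxS⟩
  have hdisj : (𝒞 : Set (Finset α)).PairwiseDisjoint id := by
    intro S hS T hT hST
    refine Finset.disjoint_left.2 fun x hxS hxT => hST ?_
    exact (hcov x (hsub S hS hxS)).unique ⟨hS, hxS⟩ ⟨hT, hxT⟩
  rw [hX, card_biUnion hdisj, mul_comm, ← smul_eq_mul, ← sum_const]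
  exact sum_congr rfl hcard

namespace SimpleGraph

variable {V ι : Type*} {G : SimpleGraph V}

theorem Coloring.adj_of_compl (c : Gᶜ.Coloring ι) {u v : V} (huv : u ≠ v) (h : c u = c v) :
    G.Adj u v := by
  by_contra hadj
  exact c.valid ((G.compl_adj u v).2 ⟨huv, hadj⟩) h

def Coloring.ofCompl (f : V → ι) (hf : ∀ u v, u ≠ v → f u = f v → G.Adj u v) : Gᶜ.Coloring ι :=
  Coloring.mk f fun {u v} huv h =>
    ((G.compl_adj u v).1 huv).2 (hf u v ((G.compl_adj u v).1 huv).1 h)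

theorem exists_isClique_partition_iff_nonempty_coloring_compl (G : SimpleGraph V) :
    (∃ C : ι → Set V, (∀ i, G.IsClique (C i)) ∧ (∀ i j, i ≠ j → Disjoint (C i) (C j)) ∧
      (⋃ i, C i) = Set.univ) ↔ Nonempty (Gᶜ.Coloring ι) := by
  constructor
  · rintro ⟨C, hclique, hdisj, hcover⟩
    have hmem : ∀ v, ∃ i, v ∈ C i := fun v => Set.mem_iUnion.1 (hcover ▸ Set.mem_univ v)
    choose f hf using hmem
    refine ⟨Coloring.ofCompl f fun u v huv h => hclique (f v) (h ▸ hf u) (hf v) huv⟩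
  · rintro ⟨c⟩
    refine ⟨fun i => c ⁻¹' {i}, fun i u hu v hv huv => c.adj_of_compl huv (hu.trans hv.symm),
      fun i j hij => Set.disjoint_left.2 fun v hi hj => hij (hi.symm.trans hj), ?_⟩
    exact Set.eq_univ_of_forall fun v => Set.mem_iUnion.2 ⟨c v, rfl⟩

theorem exists_coloring_compl_apply_eq {β : Type*} [Fintype β] [Fintype ι] (c : Gᶜ.Coloring ι)
    (y : β → V) (hy : Function.Injective y) (hindep : ∀ b b', ¬ G.Adj (y b) (y b'))
    (hcard : Fintype.card β = Fintype.card ι) : ∃ c' : Gᶜ.Coloring β, ∀ b, c' (y b) = b := by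
  have hinj : Function.Injective (c ∘ y) := fun b b' h => by
    by_contra hne
    exact hindep b b' (c.adj_of_compl (hy.ne hne) h)
  let σ := Equiv.ofBijective _ ((Fintype.bijective_iff_injective_and_card _).2 ⟨hinj, hcard⟩)
  exact ⟨Gᶜ.recolorOfEquiv σ.symm c, fun b => σ.symm_apply_apply b⟩

end SimpleGraph

section ExactCoverGraph

variable {α Z : Type*} [Fintype Z] {X : Finset α} {𝒮 : Finset (Finset α)}
  {G : SimpleGraph ({x // x ∈ X} ⊕ ({S // S ∈ 𝒮} ⊕ Z))}

theorem nonempty_coloring_compl_of_exactCover {𝒮' : Finset (Finset α)}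
    (hXclique : ∀ x x' : {x // x ∈ X}, x ≠ x' → G.Adj (Sum.inl x) (Sum.inl x'))
    (hYZ : ∀ S z, G.Adj (Sum.inr (Sum.inl S)) (Sum.inr (Sum.inr z)))
    (hXY : ∀ (x : {x // x ∈ X}) (S : {S // S ∈ 𝒮}),
      (x : α) ∈ (S : Finset α) → G.Adj (Sum.inl x) (Sum.inr (Sum.inl S)))
    (h𝒮' : 𝒮' ⊆ 𝒮) (hcover : ∀ x ∈ X, ∃ S ∈ 𝒮', x ∈ S) (hZ : Fintype.card Z + #𝒮' ≤ #𝒮) :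
    Nonempty (Gᶜ.Coloring {S // S ∈ 𝒮}) := by
  classical
  choose cover hcover𝒮' hmem using hcover
  obtain ⟨e⟩ : Nonempty (Z ↪ {S // S ∈ 𝒮 \ 𝒮'}) :=
    Function.Embedding.nonempty_of_card_le (by simp [card_sdiff_of_subset h𝒮']; omega)
  let f : {x // x ∈ X} ⊕ ({S // S ∈ 𝒮} ⊕ Z) → {S // S ∈ 𝒮}
    | .inl x => ⟨cover x x.2, h𝒮' (hcover𝒮' x x.2)⟩
    | .inr (.inl S) => S
    | .inr (.inr z) => ⟨e z, (mem_sdiff.1 (e z).2).1⟩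
  refine ⟨Coloring.ofCompl f ?_⟩
  rintro (x | S | z) (x' | S' | z') hne h <;> simp only [f, Subtype.ext_iff] at h
  · exact hXclique x x' (by rintro rfl; exact hne rfl)
  · exact hXY x S' (h ▸ hmem x x.2)
  · exact absurd (h ▸ hcover𝒮' x x.2) (mem_sdiff.1 (e z').2).2
  · exact (hXY x' S (h ▸ hmem x' x'.2)).symm
  · exact absurd (Subtype.ext h ▸ rfl) hne
  · exact hYZ S z'
  · exact absurd (h ▸ hcover𝒮' x' x'.2) (mem_sdiff.1 (e z).2).2
  · exact (hYZ S' z).symm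
  · exact absurd (e.injective (Subtype.ext h) ▸ rfl) hne

theorem exists_exactCover_of_coloring_compl {k : ℕ} (hX : #X = 3 * k) (h𝒮 : ∀ S ∈ 𝒮, #S = 3)
    (hZ : #𝒮 ≤ Fintype.card Z + k)
    (hZindep : ∀ z z', ¬ G.Adj (Sum.inr (Sum.inr z)) (Sum.inr (Sum.inr z')))
    (hXZ : ∀ x z, ¬ G.Adj (Sum.inl x) (Sum.inr (Sum.inr z)))
    (hXY : ∀ (x : {x // x ∈ X}) (S : {S // S ∈ 𝒮}),
      G.Adj (Sum.inl x) (Sum.inr (Sum.inl S)) → (x : α) ∈ (S : Finset α))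
    (c : Gᶜ.Coloring {S // S ∈ 𝒮}) (hc : ∀ S, c (Sum.inr (Sum.inl S)) = S) :
    ∃ 𝒮' ⊆ 𝒮, ∀ x ∈ X, ∃! S, S ∈ 𝒮' ∧ x ∈ S := by
  classical
  set g : {x // x ∈ X} → {S // S ∈ 𝒮} := fun x => c (Sum.inl x)
  set gZ : Z → {S // S ∈ 𝒮} := fun z => c (Sum.inr (Sum.inr z))
  have hmem : ∀ x, (x : α) ∈ (g x : Finset α) := fun x =>
    hXY x _ (c.adj_of_compl Sum.inl_ne_inr (hc _).symm)
  have hinj : Function.Injective gZ := fun z z' hzz' => by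
    by_contra hne
    exact hZindep z z' (c.adj_of_compl (by simpa using hne) hzz')
  have hdisj : Disjoint (univ.image g) (univ.image gZ) := by
    simp only [Finset.disjoint_left, mem_image, mem_univ, true_and]
    rintro _ ⟨x, rfl⟩ ⟨z, hz⟩
    exact hXZ x z (c.adj_of_compl Sum.inl_ne_inr hz.symm)
  have himage : #(univ.image g) ≤ k := by
    have := card_le_univ (univ.image g ∪ univ.image gZ)
    rw [card_union_of_disjoint hdisj, card_image_of_injective _ hinj, card_univ,
      Fintype.card_coe] at this
    omega
  have hunique : ∀ x x' : {x // x ∈ X}, (x : α) ∈ (g x' : Finset α) → g x = g x' :=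
    fun x x' hx => apply_eq_of_mem_of_card_le (g := g)
      (T := fun S : {S // S ∈ 𝒮} => (S : Finset α).subtype (· ∈ X)) (by simp [hX]) himage
      (fun S => (card_subtype _ _).trans_le ((card_filter_le _ _).trans (h𝒮 _ S.2).le))
      (fun x _ => mem_subtype.2 (hmem x)) (mem_univ x') (mem_subtype.2 hx)
  refine ⟨univ.image fun x => (g x : Finset α), fun S hS => ?_,
    fun x hx => ⟨g ⟨x, hx⟩, ⟨mem_image_of_mem _ (mem_univ _), hmem _⟩, ?_⟩⟩
  · obtain ⟨x, -, rfl⟩ := mem_image.1 hS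
    exact (g x).2
  · rintro _ ⟨hS, hxS⟩
    obtain ⟨x', -, rfl⟩ := mem_image.1 hS
    rw [hunique ⟨x, hx⟩ x' hxS]

end ExactCoverGraph

theorem stmt_14_general {α : Type*} (k s : ℕ)
    (X : Finset α) (hX : X.card = 3 * k)
    (𝒮 : Finset (Finset α)) (h𝒮card : 𝒮.card = s)
    (h𝒮 : ∀ S ∈ 𝒮, S ⊆ X ∧ S.card = 3)
    -- the graph `G` on the disjoint union of `X`, `Y = {y_S : S ∈ 𝒮}` and `Z` with `|Z| = s - k`
    (G : SimpleGraph ({x // x ∈ X} ⊕ ({S // S ∈ 𝒮} ⊕ Fin (s - k))))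
    -- `X` is a clique, `Y` and `Z` are independent, `X` is anticomplete to `Z`,
    -- `Y` is complete to `Z`, and `x ∈ X` is adjacent to `y_S` iff `x ∈ S`:
    (hXclique : ∀ x x' : {x // x ∈ X}, x ≠ x' → G.Adj (Sum.inl x) (Sum.inl x'))
    (hYindep : ∀ S S' : {S // S ∈ 𝒮}, ¬ G.Adj (Sum.inr (Sum.inl S)) (Sum.inr (Sum.inl S')))
    (hZindep : ∀ z z' : Fin (s - k), ¬ G.Adj (Sum.inr (Sum.inr z)) (Sum.inr (Sum.inr z')))
    (hXZ : ∀ (x : {x // x ∈ X}) (z : Fin (s - k)), ¬ G.Adj (Sum.inl x) (Sum.inr (Sum.inr z)))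
    (hYZ : ∀ (S : {S // S ∈ 𝒮}) (z : Fin (s - k)),
      G.Adj (Sum.inr (Sum.inl S)) (Sum.inr (Sum.inr z)))
    (hXY : ∀ (x : {x // x ∈ X}) (S : {S // S ∈ 𝒮}),
      G.Adj (Sum.inl x) (Sum.inr (Sum.inl S)) ↔ (x : α) ∈ (S : Finset α)) :
    -- exact 3-cover exists iff `V(G)` is the union of `s` pairwise disjoint cliques
    (∃ 𝒮' : Finset (Finset α), 𝒮' ⊆ 𝒮 ∧ ∀ x ∈ X, ∃! S, S ∈ 𝒮' ∧ x ∈ S) ↔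
    (∃ C : Fin s → Set ({x // x ∈ X} ⊕ ({S // S ∈ 𝒮} ⊕ Fin (s - k))),
      (∀ i, G.IsClique (C i)) ∧ (∀ i j, i ≠ j → Disjoint (C i) (C j)) ∧
      (⋃ i, C i) = Set.univ) := by
  rw [exists_isClique_partition_iff_nonempty_coloring_compl]
  constructor
  · rintro ⟨𝒮', h𝒮', hcover⟩
    have hk : 3 * k = 3 * #𝒮' := hX ▸ card_eq_mul_card_of_forall_existsUnique
      (fun S hS => (h𝒮 S (h𝒮' hS)).1) (fun S hS => (h𝒮 S (h𝒮' hS)).2) hcover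
    have h𝒮'card := card_le_card h𝒮'
    obtain ⟨c⟩ := nonempty_coloring_compl_of_exactCover hXclique hYZ (fun x S => (hXY x S).2)
      h𝒮' (fun x hx => (hcover x hx).exists) (by simp only [Fintype.card_fin]; omega)
    have hcolorable : Gᶜ.Colorable s := by simpa only [Fintype.card_coe, h𝒮card] using c.colorable
    exact hcolorable
  · rintro ⟨c⟩
    obtain ⟨c', hc'⟩ := exists_coloring_compl_apply_eq c _
      (Sum.inr_injective.comp Sum.inl_injective) hYindep (by simp [h𝒮card])
    exact exists_exactCover_of_coloring_compl hX (fun S hS => (h𝒮 S hS).2)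
      (by simp only [Fintype.card_fin]; omega) hZindep hXZ (fun x S => (hXY x S).1) c' hc'

theorem stmt_14 {α : Type*} [DecidableEq α] (k s : ℕ) (hk : 1 ≤ k) (hks : k ≤ s)
    (X : Finset α) (hX : X.card = 3 * k)
    (𝒮 : Finset (Finset α)) (h𝒮card : 𝒮.card = s)
    (h𝒮 : ∀ S ∈ 𝒮, S ⊆ X ∧ S.card = 3)
    -- the graph `G` on the disjoint union of `X`, `Y = {y_S : S ∈ 𝒮}` and `Z` with `|Z| = s - k`
    (G : SimpleGraph ({x // x ∈ X} ⊕ ({S // S ∈ 𝒮} ⊕ Fin (s - k))))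
    -- `X` is a clique, `Y` and `Z` are independent, `X` is anticomplete to `Z`,
    -- `Y` is complete to `Z`, and `x ∈ X` is adjacent to `y_S` iff `x ∈ S`:
    (hXclique : ∀ x x' : {x // x ∈ X}, x ≠ x' → G.Adj (Sum.inl x) (Sum.inl x'))
    (hYindep : ∀ S S' : {S // S ∈ 𝒮}, ¬ G.Adj (Sum.inr (Sum.inl S)) (Sum.inr (Sum.inl S')))
    (hZindep : ∀ z z' : Fin (s - k), ¬ G.Adj (Sum.inr (Sum.inr z)) (Sum.inr (Sum.inr z')))
    (hXZ : ∀ (x : {x // x ∈ X}) (z : Fin (s - k)), ¬ G.Adj (Sum.inl x) (Sum.inr (Sum.inr z)))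
    (hYZ : ∀ (S : {S // S ∈ 𝒮}) (z : Fin (s - k)),
      G.Adj (Sum.inr (Sum.inl S)) (Sum.inr (Sum.inr z)))
    (hXY : ∀ (x : {x // x ∈ X}) (S : {S // S ∈ 𝒮}),
      G.Adj (Sum.inl x) (Sum.inr (Sum.inl S)) ↔ (x : α) ∈ (S : Finset α)) :
    -- exact 3-cover exists iff `V(G)` is the union of `s` pairwise disjoint cliques
    (∃ 𝒮' : Finset (Finset α), 𝒮' ⊆ 𝒮 ∧ ∀ x ∈ X, ∃! S, S ∈ 𝒮' ∧ x ∈ S) ↔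
    (∃ C : Fin s → Set ({x // x ∈ X} ⊕ ({S // S ∈ 𝒮} ⊕ Fin (s - k))),
      (∀ i, G.IsClique (C i)) ∧ (∀ i j, i ≠ j → Disjoint (C i) (C j)) ∧
      (⋃ i, C i) = Set.univ) :=
  stmt_14_general k s X hX 𝒮 h𝒮card h𝒮 G hXclique hYindep hZindep hXZ hYZ hXY
end

section
/- Let G be a bipartite graph with bipartition (A,B) and let v1, v2, v3 be three distinct vertices of A. Let G' be obtained from G by adding the three edges v1v2, v2v3, and v1v3, and let G'' be obtained from G' by additionally adding all edges between distinct vertices of B. Then G'' is (P6, 2P3, 3P2)-free; in particular, (G', A, B) is a partitioned probe (P6, 2P3, 3P2)-free graph. -/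
open SimpleGraph

/-- The graph `2P₃`: the disjoint union of two paths on three vertices
(paths `0 - 1 - 2` and `3 - 4 - 5`). -/
def twoP3 : SimpleGraph (Fin 6) :=
  SimpleGraph.fromRel (fun i j =>
    (i = 0 ∧ j = 1) ∨ (i = 1 ∧ j = 2) ∨ (i = 3 ∧ j = 4) ∨ (i = 4 ∧ j = 5))

/-- The graph `3P₂`: the disjoint union of three edges (`2k` paired with `2k+1`). -/
def threeP2 : SimpleGraph (Fin 6) :=
  SimpleGraph.fromRel (fun i j => (i : ℕ) / 2 = (j : ℕ) / 2)

/-!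
In `G''` the set `B` is a clique, the triangle `T = {v₁, v₂, v₃}` is a clique, and since `G` is
bipartite every edge of `G''` meets `B` or lies inside `T`. Such a splitting of the vertex set
restricts to every induced subgraph, and a finite check shows that none of `P₆`, `2P₃`, `3P₂`
admits one: these graphs are triangle-free, so `B` and `T` each meet a copy in at most one edge,
while deleting any clique from any of them leaves at least two edges.
-/

namespace SimpleGraph

variable {V W : Type*}

def IsTwoCliqueSplit (G : SimpleGraph V) (B T : Set V) : Prop :=
  G.IsClique B ∧ G.IsClique T ∧ ∀ u v, G.Adj u v → u ∈ B ∨ v ∈ B ∨ (u ∈ T ∧ v ∈ T)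

variable {H : SimpleGraph W} {G : SimpleGraph V}

theorem IsClique.preimage_embedding {s : Set V} (hs : G.IsClique s) (f : H ↪g G) :
    H.IsClique (f ⁻¹' s) :=
  fun _ hu _ hv huv => f.map_rel_iff.mp (hs hu hv (f.injective.ne huv))

theorem IsTwoCliqueSplit.preimage_embedding {B T : Set V} (h : G.IsTwoCliqueSplit B T)
    (f : H ↪g G) : H.IsTwoCliqueSplit (f ⁻¹' B) (f ⁻¹' T) :=
  ⟨h.1.preimage_embedding f, h.2.1.preimage_embedding f,
    fun _ _ huv => h.2.2 _ _ (f.map_rel_iff.mpr huv)⟩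

theorem IsTwoCliqueSplit.indFree {B T : Set V} (h : G.IsTwoCliqueSplit B T)
    (hH : ∀ B' T', ¬ H.IsTwoCliqueSplit B' T') : IndFree H G :=
  ⟨fun f => hH _ _ (h.preimage_embedding f)⟩

instance {n : ℕ} (H : SimpleGraph (Fin n)) [DecidableRel H.Adj] (b t : Fin n → Bool) :
    Decidable (H.IsTwoCliqueSplit {i | b i} {i | t i}) := by
  unfold IsTwoCliqueSplit IsClique Set.Pairwise
  infer_instance

theorem not_isTwoCliqueSplit_of_forall_bool {n : ℕ} {H : SimpleGraph (Fin n)}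
    (h : ∀ b t : Fin n → Bool, ¬ H.IsTwoCliqueSplit {i | b i} {i | t i})
    (B T : Set (Fin n)) : ¬ H.IsTwoCliqueSplit B T := by
  classical
  simpa using h (fun i => decide (i ∈ B)) (fun i => decide (i ∈ T))

end SimpleGraph

instance : DecidableRel (pathGraph 6).Adj :=
  fun _ _ => decidable_of_iff _ pathGraph_adj.symm

instance : DecidableRel twoP3.Adj :=
  fun u v => decidable_of_iff _ (fromRel_adj _ u v).symm

instance : DecidableRel threeP2.Adj :=
  fun u v => decidable_of_iff _ (fromRel_adj _ u v).symm

set_option maxRecDepth 10000 in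
theorem pathGraph_six_not_isTwoCliqueSplit (B T : Set (Fin 6)) :
    ¬ (pathGraph 6).IsTwoCliqueSplit B T :=
  not_isTwoCliqueSplit_of_forall_bool (by decide) B T

set_option maxRecDepth 10000 in
theorem twoP3_not_isTwoCliqueSplit (B T : Set (Fin 6)) : ¬ twoP3.IsTwoCliqueSplit B T :=
  not_isTwoCliqueSplit_of_forall_bool (by decide) B T

set_option maxRecDepth 10000 in
theorem threeP2_not_isTwoCliqueSplit (B T : Set (Fin 6)) : ¬ threeP2.IsTwoCliqueSplit B T :=
  not_isTwoCliqueSplit_of_forall_bool (by decide) B T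

theorem stmt_15_general {V : Type*} (G : SimpleGraph V) (A B : Set V)
    (hpart : ∀ x, x ∈ A ↔ x ∉ B)
    (hbip : ∀ u v, G.Adj u v → (u ∈ A ∧ v ∈ B) ∨ (u ∈ B ∧ v ∈ A))
    (v₁ v₂ v₃ : V) (hv₁ : v₁ ∈ A) (hv₂ : v₂ ∈ A) (hv₃ : v₃ ∈ A)
    -- `G'` is `G` plus the three edges `v₁v₂`, `v₂v₃`, `v₁v₃`
    (G' : SimpleGraph V)
    (hG' : ∀ u v, G'.Adj u v ↔ (G.Adj u v ∨
      (u ≠ v ∧ u ∈ ({v₁, v₂, v₃} : Set V) ∧ v ∈ ({v₁, v₂, v₃} : Set V))))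
    -- `G''` is `G'` plus all edges between distinct vertices of `B`
    (G'' : SimpleGraph V)
    (hG'' : ∀ u v, G''.Adj u v ↔ (G'.Adj u v ∨ (u ≠ v ∧ u ∈ B ∧ v ∈ B))) :
    (IndFree (pathGraph 6) G'' ∧ IndFree twoP3 G'' ∧ IndFree threeP2 G'') ∧
    -- in particular, `(G', A, B)` is a partitioned probe `(P₆, 2P₃, 3P₂)`-free graph:
    ((∀ u ∈ B, ∀ v ∈ B, ¬ G'.Adj u v) ∧
      ∃ Gf : SimpleGraph V, G' ≤ Gf ∧
        (∀ u v, Gf.Adj u v → ¬ G'.Adj u v → u ∈ B ∧ v ∈ B) ∧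
        IndFree (pathGraph 6) Gf ∧ IndFree twoP3 Gf ∧ IndFree threeP2 Gf) := by
  have hTA : ∀ x ∈ ({v₁, v₂, v₃} : Set V), x ∈ A := by
    rintro x (rfl | rfl | rfl) <;> assumption
  have hsplit : G''.IsTwoCliqueSplit B {v₁, v₂, v₃} := by
    refine ⟨fun u hu v hv huv => (hG'' u v).mpr (Or.inr ⟨huv, hu, hv⟩),
      fun u hu v hv huv => (hG'' u v).mpr (Or.inl ((hG' u v).mpr (Or.inr ⟨huv, hu, hv⟩))),
      fun u v huv => ?_⟩
    rcases (hG'' u v).mp huv with h | ⟨-, hu, -⟩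
    · rcases (hG' u v).mp h with h | ⟨-, hu, hv⟩
      · rcases hbip u v h with ⟨-, hv⟩ | ⟨hu, -⟩
        exacts [Or.inr (Or.inl hv), Or.inl hu]
      · exact Or.inr (Or.inr ⟨hu, hv⟩)
    · exact Or.inl hu
  have hfree : IndFree (pathGraph 6) G'' ∧ IndFree twoP3 G'' ∧ IndFree threeP2 G'' :=
    ⟨hsplit.indFree pathGraph_six_not_isTwoCliqueSplit,
      hsplit.indFree twoP3_not_isTwoCliqueSplit, hsplit.indFree threeP2_not_isTwoCliqueSplit⟩
  refine ⟨hfree, fun u hu v hv huv => ?_, G'', fun u v huv => (hG'' u v).mpr (Or.inl huv),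
    fun u v huv hnot => ?_, hfree⟩
  · rcases (hG' u v).mp huv with h | ⟨-, h, -⟩
    · rcases hbip u v h with ⟨hA, -⟩ | ⟨-, hA⟩
      exacts [(hpart u).mp hA hu, (hpart v).mp hA hv]
    · exact (hpart u).mp (hTA u h) hu
  · rcases (hG'' u v).mp huv with h | ⟨-, hu, hv⟩
    exacts [absurd h hnot, ⟨hu, hv⟩]

theorem stmt_15 {V : Type*} [Fintype V] (G : SimpleGraph V) (A B : Set V)
    (hpart : ∀ x, x ∈ A ↔ x ∉ B)
    (hbip : ∀ u v, G.Adj u v → (u ∈ A ∧ v ∈ B) ∨ (u ∈ B ∧ v ∈ A))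
    (v₁ v₂ v₃ : V) (hv₁ : v₁ ∈ A) (hv₂ : v₂ ∈ A) (hv₃ : v₃ ∈ A)
    (h12 : v₁ ≠ v₂) (h13 : v₁ ≠ v₃) (h23 : v₂ ≠ v₃)
    -- `G'` is `G` plus the three edges `v₁v₂`, `v₂v₃`, `v₁v₃`
    (G' : SimpleGraph V)
    (hG' : ∀ u v, G'.Adj u v ↔ (G.Adj u v ∨
      (u ≠ v ∧ u ∈ ({v₁, v₂, v₃} : Set V) ∧ v ∈ ({v₁, v₂, v₃} : Set V))))
    -- `G''` is `G'` plus all edges between distinct vertices of `B`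
    (G'' : SimpleGraph V)
    (hG'' : ∀ u v, G''.Adj u v ↔ (G'.Adj u v ∨ (u ≠ v ∧ u ∈ B ∧ v ∈ B))) :
    (IndFree (pathGraph 6) G'' ∧ IndFree twoP3 G'' ∧ IndFree threeP2 G'') ∧
    -- in particular, `(G', A, B)` is a partitioned probe `(P₆, 2P₃, 3P₂)`-free graph:
    ((∀ u ∈ B, ∀ v ∈ B, ¬ G'.Adj u v) ∧
      ∃ Gf : SimpleGraph V, G' ≤ Gf ∧
        (∀ u v, Gf.Adj u v → ¬ G'.Adj u v → u ∈ B ∧ v ∈ B) ∧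
        IndFree (pathGraph 6) Gf ∧ IndFree twoP3 Gf ∧ IndFree threeP2 Gf) :=
  stmt_15_general G A B hpart hbip v₁ v₂ v₃ hv₁ hv₂ hv₃ G' hG' G'' hG''
end

section
/- Let s ≥ 0 be an integer and let (G,P,N) be a partitioned probe (P3+sP1)-free graph such that G is connected, G is 3-colourable, every vertex of N has degree at least 3 in G, and G[P] is P3-free. Then every vertex u ∈ N has at most 3(s+2) non-neighbours in P. -/
open SimpleGraph

/-- The graph `P₃ + sP₁`: a path `0 - 1 - 2` on three vertices plus `s` isolated vertices. -/
def P3sP1 (s : ℕ) : SimpleGraph (Fin (s + 3)) :=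
  SimpleGraph.fromRel (fun i j => ((i : ℕ) = 0 ∧ (j : ℕ) = 1) ∨ ((i : ℕ) = 1 ∧ (j : ℕ) = 2))

/-!
A non-probe `u` has only probes as neighbours, and since `G` is 3-colourable its at least three
neighbours do not form a triangle; so two of them, `x` and `y`, are non-adjacent and `x u y` is an
induced `P₃` whose only possible non-probe is `u`. More than `3 (s + 2)` probe non-neighbours of
`u` would contain a colour class `I` with more than `s + 2` vertices. As `G[P]` is a disjoint
union of cliques, each of `x` and `y` has at most one neighbour in the independent set `I`, so
`s` vertices of `I` together with `x u y` induce a `P₃ + sP₁` containing at most one non-probe.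
No completion of the non-probes adds an edge to it, a contradiction.
-/

section

open Finset

variable {V : Type*}

theorem adj_of_indFree_pathGraph_three {H : SimpleGraph V} (h : IndFree (pathGraph 3) H)
    {x w₁ w₂ : V} (hne : w₁ ≠ w₂) (h₁ : H.Adj x w₁) (h₂ : H.Adj x w₂) : H.Adj w₁ w₂ := by
  by_contra h₁₂
  have h₂₁ : ¬ H.Adj w₂ w₁ := fun h => h₁₂ h.symm
  refine h.false ⟨⟨![w₁, x, w₂], ?_⟩, fun {i j} => ?_⟩
  · intro i j hij
    fin_cases i <;> fin_cases j <;> simp_all [h₁.ne', h₂.ne', h₂.ne]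
  · change H.Adj (![w₁, x, w₂] i) (![w₁, x, w₂] j) ↔ _
    fin_cases i <;> fin_cases j <;> simp [pathGraph_adj, h₁, h₂, h₁.symm, h₂.symm, h₁₂, h₂₁]

theorem card_filter_adj_le_one_of_indFree_induce {G : SimpleGraph V} [DecidableRel G.Adj]
    {P : Set V} (hP : IndFree (pathGraph 3) (G.induce P)) {z : V} (hz : z ∈ P) {I : Finset V}
    (hIP : ↑I ⊆ P) (hI : G.IsIndepSet I) : #{w ∈ I | G.Adj z w} ≤ 1 := by
  refine card_le_one.mpr fun w₁ h₁ w₂ h₂ => by_contra fun hne => ?_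
  rw [mem_filter] at h₁ h₂
  exact hI h₁.1 h₂.1 hne <| adj_of_indFree_pathGraph_three hP (x := ⟨z, hz⟩)
    (w₁ := ⟨w₁, hIP h₁.1⟩) (w₂ := ⟨w₂, hIP h₂.1⟩) (by simpa using hne) h₁.2 h₂.2

theorem SimpleGraph.Colorable.exists_isIndepSet_subset {G : SimpleGraph V} {n m : ℕ}
    (hG : G.Colorable n) (W : Finset V) (hW : n * m < #W) :
    ∃ I ⊆ W, m < #I ∧ G.IsIndepSet I := by
  classical
  obtain ⟨C⟩ := hG
  obtain ⟨c, -, hc⟩ := exists_lt_card_fiber_of_mul_lt_card_of_maps_to (t := univ) (f := C)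
    (fun _ _ => mem_univ _) (by simpa using hW)
  refine ⟨_, filter_subset _ _, hc, (C.isIndepSet_colorClass c).mono fun v hv => ?_⟩
  exact (mem_filter.mp hv).2

theorem SimpleGraph.Colorable.exists_not_adj_of_le_ncard_neighborSet {G : SimpleGraph V}
    {n : ℕ} (hG : G.Colorable n) {u : V} (hu : n ≤ (G.neighborSet u).ncard) :
    ∃ x y, x ≠ y ∧ G.Adj u x ∧ G.Adj u y ∧ ¬ G.Adj x y := by
  classical
  rcases n.eq_zero_or_pos with rfl | hn
  · exact (colorable_zero_iff.mp hG).elim u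
  have hfin : (G.neighborSet u).Finite := Set.finite_of_ncard_pos (by omega)
  by_contra! h
  have hclique : G.IsClique (insert u hfin.toFinset : Finset V) := by
    rw [coe_insert, Set.Finite.coe_toFinset]
    exact IsClique.insert (fun x hx y hy hxy => h x y hxy hx hy) fun _ hb _ => hb
  have hcard := hclique.card_le_of_colorable hG
  rw [card_insert_of_notMem (by simp), ← Set.ncard_eq_toFinset_card _ hfin] at hcard
  omega

theorem exists_isIndepSet_subset_not_adj_of_indFree_induce {G : SimpleGraph V} {P : Set V}
    (hP : IndFree (pathGraph 3) (G.induce P)) {n s : ℕ} (hcol : G.Colorable n) {x y : V}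
    (hx : x ∈ P) (hy : y ∈ P) {W : Finset V} (hWP : ↑W ⊆ P) (hW : n * (s + 2) < #W) :
    ∃ K ⊆ W, s ≤ #K ∧ G.IsIndepSet K ∧ ∀ w ∈ K, ¬ G.Adj x w ∧ ¬ G.Adj y w := by
  classical
  obtain ⟨I, hIW, hIcard, hI⟩ := hcol.exists_isIndepSet_subset W hW
  have hIP : ↑I ⊆ P := (coe_subset.mpr hIW).trans hWP
  set K := {w ∈ I | ¬ G.Adj x w ∧ ¬ G.Adj y w}
  have hcover : I ⊆ K ∪ {w ∈ I | G.Adj x w} ∪ {w ∈ I | G.Adj y w} := by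
    intro w hw
    simp only [K, mem_union, mem_filter]
    tauto
  have := card_le_card hcover
  have := card_union_le (K ∪ {w ∈ I | G.Adj x w}) {w ∈ I | G.Adj y w}
  have := card_union_le K {w ∈ I | G.Adj x w}
  have := card_filter_adj_le_one_of_indFree_induce hP hx hIP hI
  have := card_filter_adj_le_one_of_indFree_induce hP hy hIP hI
  exact ⟨K, (filter_subset _ _).trans hIW, by omega, hI.mono (filter_subset _ _),
    fun w hw => (mem_filter.mp hw).2⟩

theorem exists_embedding_P3sP1 {H : SimpleGraph V} {s : ℕ} {x u y : V} {e : Fin s → V}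
    (he : Function.Injective e) (hxy : x ≠ y) (hxu : H.Adj x u) (huy : H.Adj u y)
    (hnxy : ¬ H.Adj x y) (hex : ∀ i, ¬ H.Adj x (e i)) (heu : ∀ i, ¬ H.Adj u (e i))
    (hey : ∀ i, ¬ H.Adj y (e i)) (hee : ∀ i j, ¬ H.Adj (e i) (e j)) :
    ∃ f : P3sP1 s ↪g H, Set.range f = insert x (insert u (insert y (Set.range e))) := by
  let f : Fin (s + 3) → V := Fin.cons x (Fin.cons u (Fin.cons y e))
  have hinj : Function.Injective f := by
    simp only [f, Fin.cons_injective_iff, Fin.range_cons, Set.mem_insert_iff, Set.mem_range,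
      not_or, not_exists]
    exact ⟨⟨hxu.ne, hxy, fun i h => heu i (h ▸ hxu.symm)⟩,
      ⟨huy.ne, fun i h => hex i (h ▸ hxu)⟩, fun i h => heu i (h ▸ huy), he⟩
  refine ⟨⟨⟨f, hinj⟩, fun {i j} => ?_⟩, by simp [f]⟩
  change H.Adj (f i) (f j) ↔ _
  have hcases : ∀ i : Fin (s + 3), i = 0 ∨ i = Fin.succ 0 ∨ i = Fin.succ (Fin.succ 0) ∨
      ∃ k : Fin s, i = k.succ.succ.succ := by
    intro i
    induction i using Fin.cases with
    | zero => simp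
    | succ i => induction i using Fin.cases with
      | zero => simp
      | succ i => induction i using Fin.cases with
        | zero => simp
        | succ k => exact .inr (.inr (.inr ⟨k, rfl⟩))
  have hnyx : ¬ H.Adj y x := fun h => hnxy h.symm
  rcases hcases i with rfl | rfl | rfl | ⟨k, rfl⟩ <;>
    rcases hcases j with rfl | rfl | rfl | ⟨l, rfl⟩ <;>
    simp only [f, P3sP1, fromRel_adj, Fin.cons_zero, Fin.cons_succ, Fin.val_succ, Fin.val_zero,
      ne_eq, Fin.succ_inj] <;>
    simp [hxu, hxu.symm, huy, huy.symm, hnxy, hnyx, hex, heu, hey, hee, H.adj_comm (e _)]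

/-- Completing the non-probes creates no edge inside a vertex set with at most one non-probe. -/
theorem PartProbeFree.not_subsingleton_range_inter {W : Type*} {H : SimpleGraph W}
    {G : SimpleGraph V} {N : Set V} (h : PartProbeFree H G N) (f : H ↪g G) :
    ¬ (Set.range f ∩ N).Subsingleton := by
  obtain ⟨-, G', hle, hnew, hfree⟩ := h
  intro hf
  refine hfree.false ⟨f.toEmbedding, fun {i j} => ?_⟩
  rw [← f.map_rel_iff]
  refine ⟨fun h' => by_contra fun hG => ?_, fun h => hle h⟩
  obtain ⟨hi, hj⟩ := hnew _ _ h' hG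
  exact h'.ne (hf ⟨⟨i, rfl⟩, hi⟩ ⟨⟨j, rfl⟩, hj⟩)

theorem PartProbeFree.ncard_le_of_not_adj {s n : ℕ} {G : SimpleGraph V} {N : Set V}
    (hprobe : PartProbeFree (P3sP1 s) G N) (hcol : G.Colorable n)
    (hP3 : IndFree (pathGraph 3) (G.induce Nᶜ)) {x u y : V} (hx : x ∉ N) (hy : y ∉ N)
    (hxy : x ≠ y) (hux : G.Adj u x) (huy : G.Adj u y) (hnxy : ¬ G.Adj x y) {W : Set V}
    (hW : W ⊆ {w | w ∉ N ∧ ¬ G.Adj u w}) : W.ncard ≤ n * (s + 2) := by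
  by_contra! hlt
  have hfin : W.Finite := Set.finite_of_ncard_pos (by omega)
  rw [Set.ncard_eq_toFinset_card _ hfin] at hlt
  have hW' : ∀ w ∈ hfin.toFinset, w ∉ N ∧ ¬ G.Adj u w := fun w hw => hW (hfin.mem_toFinset.mp hw)
  obtain ⟨K, hKW, hKcard, hK, hKxy⟩ := exists_isIndepSet_subset_not_adj_of_indFree_induce hP3
    hcol hx hy (fun w hw => (hW' w hw).1) hlt
  obtain ⟨e⟩ : Nonempty (Fin s ↪ K) := Function.Embedding.nonempty_of_card_le (by simpa)
  set e' := e.trans (Function.Embedding.subtype _)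
  have he' : ∀ i, e' i ∈ K := fun i => (e i).2
  obtain ⟨f, hf⟩ := exists_embedding_P3sP1 e'.injective hxy hux.symm huy hnxy
    (fun i => (hKxy _ (he' i)).1) (fun i => (hW' _ (hKW (he' i))).2) (fun i => (hKxy _ (he' i)).2)
    (fun i j hadj => hK (he' i) (he' j) hadj.ne hadj)
  refine hprobe.not_subsingleton_range_inter f
    ((Set.subsingleton_singleton (a := u)).anti ?_)
  rintro v ⟨hv, hvN⟩
  rw [hf] at hv
  rcases hv with rfl | rfl | rfl | ⟨i, rfl⟩
  exacts [(hx hvN).elim, rfl, (hy hvN).elim, ((hW' _ (hKW (he' i))).1 hvN).elim]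

end

theorem stmt_16_general (s : ℕ) {V : Type*} (G : SimpleGraph V) (P N : Set V)
    (hPN : P = Nᶜ)
    (hprobe : PartProbeFree (P3sP1 s) G N)
    (hcol : G.Colorable 3)
    (hdeg : ∀ v ∈ N, 3 ≤ (G.neighborSet v).ncard)
    (hP3free : IndFree (pathGraph 3) (G.induce P)) :
    ∀ u ∈ N, ({w | w ∈ P ∧ w ≠ u ∧ ¬ G.Adj u w}).ncard ≤ 3 * (s + 2) := by
  subst hPN
  intro u hu
  have hprobe_of_adj : ∀ v, G.Adj u v → v ∉ N := fun v huv hv => hprobe.1 u hu v hv huv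
  obtain ⟨x, y, hxy, hux, huy, hnxy⟩ := hcol.exists_not_adj_of_le_ncard_neighborSet (hdeg u hu)
  exact hprobe.ncard_le_of_not_adj hcol hP3free (hprobe_of_adj x hux) (hprobe_of_adj y huy) hxy
    hux huy hnxy fun w hw => ⟨hw.1, hw.2.2⟩

theorem stmt_16 (s : ℕ) {V : Type*} [Fintype V] (G : SimpleGraph V) (P N : Set V)
    (hPN : P = Nᶜ)
    (hprobe : PartProbeFree (P3sP1 s) G N)
    (hconn : G.Connected)
    (hcol : G.Colorable 3)
    (hdeg : ∀ v ∈ N, 3 ≤ (G.neighborSet v).ncard)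
    (hP3free : IndFree (pathGraph 3) (G.induce P)) :
    ∀ u ∈ N, ({w | w ∈ P ∧ w ≠ u ∧ ¬ G.Adj u w}).ncard ≤ 3 * (s + 2) :=
  stmt_16_general s G P N hPN hprobe hcol hdeg hP3free
end

section
/- Let (G,P,N) be a partitioned probe P5-free graph, let K be a connected component of G[P], and let v ∈ N be a vertex that has a neighbour u ∈ P\V(K). Let S ⊆ V(K) be a set such that G[S] is connected, let A ⊆ S be an independent set of G, and suppose that every neighbour of v in S belongs to A. If v has at least one neighbour in A, then v is adjacent to every vertex of A. -/
/-!
The neighbours of `v` in `S` form a subset `X` of the independent set `A`. The set of vertices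
of `S` that lie in `X` or have a neighbour in `X` is closed under adjacency in `G[S]`: if
`x ∈ X`, `x ∼ y ∼ z` in `S` and `z ≁ x`, then `y ∉ A`, so `v ≁ y`, and `u – v – x – y – z` is an
induced `P₅` of every completion `G + F` unless `v ∼ z`; indeed `u, x, y, z` are probes and `u`,
lying outside the component `K`, has no neighbour in `S`. As `G[S]` is connected, every `a ∈ A`
is thus in `X` or adjacent to a vertex of `X ⊆ A`, and the latter contradicts independence.
-/

open SimpleGraph

theorem SimpleGraph.nonempty_pathGraph_five_embedding_s17 {V : Type*} {G : SimpleGraph V}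
    {a b c d e : V} (hab : G.Adj a b) (hbc : G.Adj b c) (hcd : G.Adj c d) (hde : G.Adj d e)
    (hac : ¬G.Adj a c) (had : ¬G.Adj a d) (hae : ¬G.Adj a e)
    (hbd : ¬G.Adj b d) (hbe : ¬G.Adj b e) (hce : ¬G.Adj c e) :
    Nonempty (pathGraph 5 ↪g G) := by
  refine ⟨⟨⟨![a, b, c, d, e], ?_⟩, ?_⟩⟩
  · intro i j hij
    fin_cases i <;> fin_cases j <;> simp_all [G.adj_comm]
  · intro i j
    change G.Adj (![a, b, c, d, e] i) (![a, b, c, d, e] j) ↔ _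
    fin_cases i <;> fin_cases j <;> simp_all [pathGraph_adj, G.adj_comm]

theorem SimpleGraph.Reachable.mem_of_adj_closed {V : Type*} {G : SimpleGraph V} {T : Set V}
    {x y : V} (h : G.Reachable x y) (hx : x ∈ T)
    (hT : ∀ ⦃y z⦄, y ∈ T → G.Adj y z → z ∈ T) : y ∈ T := by
  obtain ⟨p⟩ := h
  induction p with
  | nil => exact hx
  | cons hadj _ ih => exact ih (hT hx hadj)

theorem PartProbeFree.exists_adj_iff_of_notMem {W V : Type*} {H : SimpleGraph W}
    {G : SimpleGraph V} {N : Set V} (h : PartProbeFree H G N) :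
    ∃ G' : SimpleGraph V, (∀ p q, p ∉ N → (G'.Adj p q ↔ G.Adj p q)) ∧ IndFree H G' := by
  obtain ⟨-, G', hle, hextra, hfree⟩ := h
  refine ⟨G', fun p q hp => ⟨fun hG' => ?_, fun hG => hle hG⟩, hfree⟩
  by_contra hG
  exact hp (hextra p q hG' hG).1

theorem PartProbeFree.adj_of_path_five {V : Type*} {G : SimpleGraph V} {N : Set V}
    (h : PartProbeFree (pathGraph 5) G N) {u v x y z : V}
    (hu : u ∉ N) (hx : x ∉ N) (hy : y ∉ N) (hz : z ∉ N)
    (huv : G.Adj u v) (hvx : G.Adj v x) (hxy : G.Adj x y) (hyz : G.Adj y z)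
    (hux : ¬G.Adj u x) (huy : ¬G.Adj u y) (huz : ¬G.Adj u z)
    (hvy : ¬G.Adj v y) (hxz : ¬G.Adj x z) : G.Adj v z := by
  by_cases hzx : z = x
  · exact hzx ▸ hvx
  by_contra hvz
  obtain ⟨G', hG', hfree⟩ := h.exists_adj_iff_of_notMem
  have hG'sym : ∀ p q, q ∉ N → (G'.Adj p q ↔ G.Adj p q) := fun p q hq => by
    rw [G'.adj_comm, G.adj_comm, hG' q p hq]
  obtain ⟨emb⟩ := nonempty_pathGraph_five_embedding_s17 (G := G')
    ((hG' u v hu).2 huv) ((hG'sym v x hx).2 hvx) ((hG' x y hx).2 hxy) ((hG' y z hy).2 hyz)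
    (by rwa [hG' u x hu]) (by rwa [hG' u y hu]) (by rwa [hG' u z hu])
    (by rwa [hG'sym v y hy]) (by rwa [hG'sym v z hz]) (by rwa [hG' x z hx])
  exact hfree.false emb

theorem stmt_17_general {V : Type*} (G : SimpleGraph V) (P N : Set V)
    (hPN : P = Nᶜ)
    (hprobe : PartProbeFree (pathGraph 5) G N)
    (K : Set V) (hK : IsCompOf G P K)
    (v : V)
    (u : V) (hu : u ∈ P) (huK : u ∉ K) (hvu : G.Adj v u)
    (S : Set V) (hSK : S ⊆ K) (hSconn : (G.induce S).Connected)
    (A : Set V) (hAS : A ⊆ S)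
    (hAindep : ∀ a ∈ A, ∀ b ∈ A, ¬ G.Adj a b)
    (hnbrA : ∀ w ∈ S, G.Adj v w → w ∈ A)
    (hsome : ∃ a ∈ A, G.Adj v a) :
    ∀ a ∈ A, G.Adj v a := by
  subst hPN
  have hSprobe : ∀ s ∈ S, s ∉ N := fun s hs => hK.1 (hSK hs)
  have huS : ∀ s ∈ S, ¬G.Adj u s := fun s hs hus => huK (hK.2.2 s (hSK hs) u hu hus.symm)
  have hnear : ∀ s ∈ S, G.Adj v s ∨ ∃ x ∈ S, G.Adj v x ∧ G.Adj x s := by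
    obtain ⟨a₀, ha₀, hva₀⟩ := hsome
    intro s hs
    refine (hSconn.preconnected ⟨a₀, hAS ha₀⟩ ⟨s, hs⟩).mem_of_adj_closed
      (T := {w : S | G.Adj v w ∨ ∃ x ∈ S, G.Adj v x ∧ G.Adj x w}) (.inl hva₀) ?_
    rintro ⟨y, hy⟩ ⟨z, hz⟩ (hvy | ⟨x, hx, hvx, hxy⟩) (hyz : G.Adj y z)
    · exact .inr ⟨y, hy, hvy, hyz⟩
    by_cases hxz : G.Adj x z
    · exact .inr ⟨x, hx, hvx, hxz⟩
    have hvy : ¬G.Adj v y := fun hvy =>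
      hAindep x (hnbrA x hx hvx) y (hnbrA y hy hvy) hxy
    exact .inl (hprobe.adj_of_path_five hu (hSprobe x hx) (hSprobe y hy) (hSprobe z hz)
      hvu.symm hvx hxy hyz (huS x hx) (huS y hy) (huS z hz) hvy hxz)
  intro a ha
  obtain hva | ⟨x, hx, hvx, hxa⟩ := hnear a (hAS ha)
  · exact hva
  · exact absurd hxa (hAindep x (hnbrA x hx hvx) a ha)

theorem stmt_17 {V : Type*} [Fintype V] (G : SimpleGraph V) (P N : Set V)
    (hPN : P = Nᶜ)
    (hprobe : PartProbeFree (pathGraph 5) G N)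
    (K : Set V) (hK : IsCompOf G P K)
    (v : V) (hv : v ∈ N)
    (u : V) (hu : u ∈ P) (huK : u ∉ K) (hvu : G.Adj v u)
    (S : Set V) (hSK : S ⊆ K) (hSconn : (G.induce S).Connected)
    (A : Set V) (hAS : A ⊆ S)
    (hAindep : ∀ a ∈ A, ∀ b ∈ A, ¬ G.Adj a b)
    (hnbrA : ∀ w ∈ S, G.Adj v w → w ∈ A)
    (hsome : ∃ a ∈ A, G.Adj v a) :
    ∀ a ∈ A, G.Adj v a :=
  stmt_17_general G P N hPN hprobe K hK v u hu huK hvu S hSK hSconn A hAS hAindep hnbrA hsome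
end
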